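/- arXiv:1012.0640 — 6 statements merged into one kernel-verified Lean document; each statement's English description precedes it below -/
import Mathlib

section
/- For natural numbers n and p with 2p ≤ n, the number of ballot sequences of length n with p down-steps equals C(n,p) − C(n,p−1), where C(n,−1) = 0. -/
open scoped BigOperators
open Finset

/-- A ballot sequence of length `n` with `p` down-steps: entries are `±1`, exactly
`p` entries equal `-1`, and every partial sum is nonnegative. -/
def IsBallot (n p : ℕ) (ε : Fin n → ℤ) : Prop :=
  (∀ i, ε i = 1 ∨ ε i = -1) ∧
  (Finset.univ.filter fun i => ε i = -1).card = p ∧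
  ∀ i : Fin n, 0 ≤ ∑ j ∈ Finset.univ.filter (fun j => j ≤ i), ε j

lemma card_filter_snoc (n : ℕ) (ε : Fin n → ℤ) (x : ℤ) :
    (Finset.univ.filter fun i : Fin (n+1) => (Fin.snoc ε x : Fin (n+1) → ℤ) i = -1).card
      = (Finset.univ.filter fun i => ε i = -1).card + (if x = (-1:ℤ) then 1 else 0) := by
  rw [Finset.card_filter, Finset.card_filter, Fin.sum_univ_castSucc]
  simp

lemma prefixsum_snoc_castSucc (n : ℕ) (ε : Fin n → ℤ) (x : ℤ) (k : Fin n) :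
    ∑ j ∈ Finset.univ.filter (fun j => j ≤ Fin.castSucc k), Fin.snoc ε x j
      = ∑ j ∈ Finset.univ.filter (fun j => j ≤ k), ε j := by
  rw [Finset.sum_filter, Finset.sum_filter, Fin.sum_univ_castSucc]
  simp [Fin.castSucc_le_castSucc_iff, (Fin.castSucc_lt_last k).not_ge]

lemma prefixsum_snoc_last (n : ℕ) (ε : Fin n → ℤ) (x : ℤ) :
    ∑ j ∈ Finset.univ.filter (fun j => j ≤ Fin.last n), Fin.snoc ε x j
      = (∑ j, ε j) + x := by
  have : (Finset.univ.filter fun j : Fin (n+1) => j ≤ Fin.last n) = Finset.univ := by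
    simp [Fin.le_last]
  rw [this, Fin.sum_univ_castSucc]
  simp

lemma total_sum (n p : ℕ) (ε : Fin n → ℤ) (h1 : ∀ i, ε i = 1 ∨ ε i = -1)
    (h2 : (Finset.univ.filter fun i => ε i = -1).card = p) :
    ∑ j, ε j = (n:ℤ) - 2*p := by
  classical
  have hpn : p ≤ n := by
    rw [← h2]
    simpa using Finset.card_filter_le Finset.univ (fun i => ε i = -1)
  have hsplit := Finset.sum_filter_add_sum_filter_not Finset.univ
    (fun i => ε i = -1) ε
  have hA : ∑ j ∈ Finset.univ.filter (fun i => ε i = -1), ε j = -(p:ℤ) := by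
    rw [Finset.sum_congr rfl (fun j hj => (Finset.mem_filter.mp hj).2)]
    simp [h2]
  have hB : ∑ j ∈ Finset.univ.filter (fun i => ¬ ε i = -1), ε j
      = ((n - p : ℕ) : ℤ) := by
    have : ∀ j ∈ Finset.univ.filter (fun i => ¬ ε i = -1), ε j = 1 := by
      intro j hj
      rcases h1 j with h | h
      · exact h
      · exact absurd h (Finset.mem_filter.mp hj).2
    rw [Finset.sum_congr rfl this]
    have hc := Finset.card_filter_add_card_filter_not (s := Finset.univ)
      (p := fun i : Fin n => ε i = -1)
    simp only [Finset.card_univ, Fintype.card_fin, h2] at hc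
    simp [Finset.sum_const]
    omega
  rw [← hsplit, hA, hB]
  push_cast [hpn]
  ring

lemma ballot_le {n p : ℕ} {ε : Fin n → ℤ} (h : IsBallot n p ε) : 2*p ≤ n := by
  obtain ⟨h1, h2, h3⟩ := h
  cases n with
  | zero =>
      have : p = 0 := by simpa using h2.symm
      omega
  | succ m =>
      have := h3 (Fin.last m)
      rw [show (Finset.univ.filter fun j : Fin (m+1) => j ≤ Fin.last m) = Finset.univ by
        simp [Fin.le_last], total_sum (m+1) p ε h1 h2] at this
      -- (cast already clean)
      omega

lemma isBallot_snoc_one (n p : ℕ) (ε : Fin n → ℤ) :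
    IsBallot (n+1) p (Fin.snoc ε 1) ↔ IsBallot n p ε := by
  constructor
  · rintro ⟨h1, h2, h3⟩
    refine ⟨fun i => by simpa using h1 i.castSucc, ?_, fun k => by
      simpa [prefixsum_snoc_castSucc] using h3 k.castSucc⟩
    rw [card_filter_snoc] at h2
    simpa using h2
  · rintro h
    obtain ⟨h1, h2, h3⟩ := h
    have hle : 2*p ≤ n := ballot_le ⟨h1, h2, h3⟩
    refine ⟨?_, ?_, ?_⟩
    · intro i
      induction i using Fin.lastCases with
      | last => simp
      | cast j => simpa using h1 j
    · rw [card_filter_snoc]; simpa using h2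
    · intro k
      induction k using Fin.lastCases with
      | last =>
          rw [prefixsum_snoc_last, total_sum n p ε h1 h2]
          omega
      | cast j => rw [prefixsum_snoc_castSucc]; exact h3 j

lemma isBallot_snoc_neg (n p : ℕ) (ε : Fin n → ℤ) :
    IsBallot (n+1) (p+1) (Fin.snoc ε (-1)) ↔ IsBallot n p ε ∧ 2*(p+1) ≤ n+1 := by
  constructor
  · rintro ⟨h1, h2, h3⟩
    rw [card_filter_snoc] at h2
    norm_num at h2
    have h2' : (Finset.univ.filter fun i => ε i = -1).card = p := by omega
    have hb : IsBallot n p ε := by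
      refine ⟨fun i => by simpa using h1 i.castSucc, h2', fun k => by
        simpa [prefixsum_snoc_castSucc] using h3 k.castSucc⟩
    refine ⟨hb, ?_⟩
    have := h3 (Fin.last n)
    rw [prefixsum_snoc_last, total_sum n p ε hb.1 h2'] at this
    omega
  · rintro ⟨⟨h1, h2, h3⟩, hle⟩
    refine ⟨?_, ?_, ?_⟩
    · intro i
      induction i using Fin.lastCases with
      | last => simp
      | cast j => simpa using h1 j
    · rw [card_filter_snoc]; simp [h2]
    · intro k
      induction k using Fin.lastCases with
      | last =>
          rw [prefixsum_snoc_last, total_sum n p ε h1 h2]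
          omega
      | cast j => rw [prefixsum_snoc_castSucc]; exact h3 j

lemma finite_ballot (n p : ℕ) : {ε : Fin n → ℤ | IsBallot n p ε}.Finite := by
  apply Set.Finite.subset (Set.Finite.pi (fun _ : Fin n => Set.finite_Icc (-1:ℤ) 1))
  intro ε hε
  rw [Set.mem_pi]
  intro i _
  rcases hε.1 i with h | h <;> simp [h]

lemma snoc_injective (n : ℕ) (x : ℤ) :
    Function.Injective (fun ε : Fin n → ℤ => (Fin.snoc ε x : Fin (n+1) → ℤ)) := by
  intro a b hab
  have := congrArg Fin.init hab
  simpa [Fin.init_snoc] using this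

lemma ballot_zero (n : ℕ) :
    {ε : Fin n → ℤ | IsBallot n 0 ε} = {fun _ => 1} := by
  ext ε
  simp only [Set.mem_setOf_eq, Set.mem_singleton_iff]
  constructor
  · rintro ⟨h1, h2, _⟩
    funext i
    rcases h1 i with h | h
    · exact h
    · exfalso
      rw [Finset.card_eq_zero] at h2
      exact absurd h2 (Finset.ne_empty_of_mem (Finset.mem_filter.mpr ⟨Finset.mem_univ i, h⟩))
  · rintro rfl
    refine ⟨fun i => Or.inl rfl, by simp, fun i => ?_⟩
    simp

lemma decomp (m q : ℕ) (h : 2*(q+1) ≤ m+1) :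
    {ε : Fin (m+1) → ℤ | IsBallot (m+1) (q+1) ε}
      = (fun ε : Fin m → ℤ => Fin.snoc ε 1) '' {ε | IsBallot m (q+1) ε}
        ∪ (fun ε : Fin m → ℤ => Fin.snoc ε (-1)) '' {ε | IsBallot m q ε} := by
  ext ε
  simp only [Set.mem_setOf_eq, Set.mem_union, Set.mem_image]
  constructor
  · intro hε
    have hsnoc : Fin.snoc (Fin.init ε) (ε (Fin.last m)) = ε := Fin.snoc_init_self ε
    rcases hε.1 (Fin.last m) with hl | hl
    · left
      refine ⟨Fin.init ε, ?_, by rw [← hl]; exact hsnoc⟩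
      rw [← isBallot_snoc_one]
      rw [hl] at hsnoc
      rwa [hsnoc]
    · right
      refine ⟨Fin.init ε, ?_, by rw [← hl]; exact hsnoc⟩
      have : IsBallot m q (Fin.init ε) ∧ 2*(q+1) ≤ m+1 := by
        rw [← isBallot_snoc_neg]
        rw [hl] at hsnoc
        rwa [hsnoc]
      exact this.1
  · rintro (⟨δ, hδ, rfl⟩ | ⟨δ, hδ, rfl⟩)
    · exact (isBallot_snoc_one m (q+1) δ).2 hδ
    · exact (isBallot_snoc_neg m q δ).2 ⟨hδ, h⟩

lemma ballot_count_aux : ∀ n p : ℕ, 2*p ≤ n+1 →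
    {ε : Fin n → ℤ | IsBallot n p ε}.ncard
      = n.choose p - (if p = 0 then 0 else n.choose (p - 1)) := by
  intro n
  induction n with
  | zero =>
      intro p hp
      have : p = 0 := by omega
      subst this
      rw [ballot_zero]
      simp
  | succ m ih =>
      intro p hp
      match p with
      | 0 =>
          rw [ballot_zero]
          simp
      | q+1 =>
          by_cases hcase : 2*(q+1) ≤ m+1
          · have hdisj : Disjoint ((fun ε : Fin m → ℤ => (Fin.snoc ε 1 : Fin (m+1) → ℤ)) '' {ε | IsBallot m (q+1) ε})
                ((fun ε : Fin m → ℤ => (Fin.snoc ε (-1) : Fin (m+1) → ℤ)) '' {ε | IsBallot m q ε}) := by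
              rw [Set.disjoint_left]
              rintro s ⟨a, _, rfl⟩ ⟨b, _, hb⟩
              have := congrArg (fun f => f (Fin.last m)) hb
              simp at this
            rw [decomp m q hcase,
              Set.ncard_union_eq hdisj ((finite_ballot m (q+1)).image _) ((finite_ballot m q).image _),
              Set.ncard_image_of_injective _ (snoc_injective m 1),
              Set.ncard_image_of_injective _ (snoc_injective m (-1))]
            rw [ih (q+1) (by omega), ih q (by omega)]
            -- arithmetic
            have pascal1 : (m+1).choose (q+1) = m.choose q + m.choose (q+1) :=
              Nat.choose_succ_succ m q
            have hmono1 : 2*(q+1) ≤ m → m.choose q ≤ m.choose (q+1) := by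
              intro hq
              exact Nat.choose_le_succ_of_lt_half_left (by omega)
            have hsym : 2*(q+1) = m+1 → m.choose (q+1) = m.choose q := by
              intro hq
              have : m - (q+1) = q := by omega
              rw [← Nat.choose_symm (by omega : q+1 ≤ m), this]
            match q with
            | 0 =>
                simp only [if_pos rfl, if_neg (Nat.succ_ne_zero 0)]
                simp only [Nat.choose_zero_right, Nat.choose_one_right]
                rcases Nat.lt_or_ge m 2 with hm | hm
                · interval_cases m <;> simp_all
                · have := hmono1 (by omega)
                  simp [Nat.choose_one_right] at this pascal1 hsym ⊢
                  omega
            | r+1 =>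
                simp only [if_neg (Nat.succ_ne_zero _), Nat.succ_sub_one]
                have pascal2 : (m+1).choose (r+1) = m.choose r + m.choose (r+1) :=
                  Nat.choose_succ_succ m r
                have hmono2 : m.choose r ≤ m.choose (r+1) :=
                  Nat.choose_le_succ_of_lt_half_left (by omega)
                rcases Nat.lt_or_ge m (2*(r+2)) with hm | hm
                · have h1 := hsym (by omega)
                  omega
                · have h1 := hmono1 (by omega)
                  omega
          · -- 2*(q+1) = m+2, set empty
            have hempty : {ε : Fin (m+1) → ℤ | IsBallot (m+1) (q+1) ε} = ∅ := by
              ext ε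
              simp only [Set.mem_setOf_eq, Set.mem_empty_iff_false, iff_false]
              intro hε
              have := ballot_le hε
              omega
            rw [hempty, Set.ncard_empty]
            have hm : m + 1 = 2*q + 1 := by omega
            have hsym : (m+1).choose (q+1) = (m+1).choose q := by
              have : (m+1) - (q+1) = q := by omega
              rw [← Nat.choose_symm (by omega : q+1 ≤ m+1), this]
            simp only [if_neg (Nat.succ_ne_zero _), Nat.succ_sub_one]
            omega

theorem card_ballot (n p : ℕ) (h : 2 * p ≤ n) :
    {ε : Fin n → ℤ | IsBallot n p ε}.ncard
      = n.choose p - (if p = 0 then 0 else n.choose (p - 1)) := by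
  exact ballot_count_aux n p (by omega)
end

section
/- For natural numbers n and p with 2p ≤ n, the number of noncrossing half-diagrams on n points with p arcs equals C(n,p) − C(n,p−1), where C(n,−1) = 0. -/
/-- A noncrossing half-diagram on `n` points (realized as `Fin n`): a partial matching
of `{1,…,n}` into two-element arcs, with no crossing pair of arcs and no through-string
(unmatched point) lying strictly inside an arc. -/
structure HalfDiag (n : ℕ) where
  arcs : Finset (Finset (Fin n))
  two : ∀ a ∈ arcs, a.card = 2
  disj : ∀ a ∈ arcs, ∀ b ∈ arcs, a ≠ b → Disjoint a b
  nc1 : ∀ a ∈ arcs, ∀ b ∈ arcs, ∀ i j k l : Fin n,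
      i ∈ a → j ∈ a → k ∈ b → l ∈ b → i < k → k < j → j < l → False
  nc2 : ∀ a ∈ arcs, ∀ i j : Fin n, i ∈ a → j ∈ a →
      ∀ k : Fin n, (∀ b ∈ arcs, k ∉ b) → i < k → k < j → False

/-!
Removing the last point `m` of a half-diagram gives the recursion
`f(n+1, p+1) = f(n, p+1) + [2p < n] f(n, p)`. If `m` is a through-string, simply delete it. If `m`
closes an arc `{t, m}`, then every point strictly between `t` and `m` is matched and no arc can
straddle `t`, so after deleting the arc, `t` is the last through-string of a diagram on `n` points
with `p` arcs. Conversely, the last through-string of any such diagram can be joined to a new last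
point, and a through-string exists iff `2p < n`. The numbers `C(n,p) - C(n,p-1)` satisfy the same
recursion by Pascal's rule, using `C(2q+1, q+1) = C(2q+1, q)` when `n + 1 = 2(p + 1)`.
-/

open Finset

section HalfDiagram

variable {α : Type*} [LinearOrder α]

/-- `HalfDiag n` is `IsHalfDiagram univ` on `Fin n`; an arbitrary ground set `s` lets us induct by
removing its largest point. -/
structure IsHalfDiagram (s : Finset α) (A : Finset (Finset α)) : Prop where
  subset : ∀ a ∈ A, a ⊆ s
  card_eq_two : ∀ a ∈ A, #a = 2
  pairwiseDisjoint : (A : Set (Finset α)).PairwiseDisjoint id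
  noncrossing : ∀ a ∈ A, ∀ b ∈ A, ∀ i j k l : α,
    i ∈ a → j ∈ a → k ∈ b → l ∈ b → i < k → k < j → j < l → False
  not_free_inside : ∀ a ∈ A, ∀ i j : α, i ∈ a → j ∈ a →
    ∀ k ∈ s, (∀ b ∈ A, k ∉ b) → i < k → k < j → False

def throughStrings (s : Finset α) (A : Finset (Finset α)) : Finset α :=
  s \ A.biUnion id

variable {s : Finset α} {A B : Finset (Finset α)} {m t : α}

lemma mem_throughStrings {k : α} :
    k ∈ throughStrings s A ↔ k ∈ s ∧ ∀ a ∈ A, k ∉ a := by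
  simp [throughStrings]

lemma eq_and_eq_of_mem_pair_of_lt {x y i j : α} (hxy : x < y) (hi : i ∈ ({x, y} : Finset α))
    (hj : j ∈ ({x, y} : Finset α)) (hij : i < j) : i = x ∧ j = y := by
  simp only [mem_insert, mem_singleton] at hi hj
  rcases hi with rfl | rfl <;> rcases hj with rfl | rfl
  exacts [absurd hij (lt_irrefl _), ⟨rfl, rfl⟩, absurd hij (lt_asymm hxy),
    absurd hij (lt_irrefl _)]

lemma isHalfDiagram_empty (s : Finset α) : IsHalfDiagram s ∅ :=
  ⟨by simp, by simp, by simp, by simp, by simp⟩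

namespace IsHalfDiagram

lemma card_biUnion (hA : IsHalfDiagram s A) : #(A.biUnion id) = 2 * #A := by
  rw [Finset.card_biUnion hA.pairwiseDisjoint]
  simp only [id, sum_congr rfl hA.card_eq_two, sum_const, smul_eq_mul, mul_comm]

lemma two_mul_card_le (hA : IsHalfDiagram s A) : 2 * #A ≤ #s :=
  hA.card_biUnion ▸ card_le_card (biUnion_subset.2 hA.subset)

lemma throughStrings_nonempty_iff (hA : IsHalfDiagram s A) :
    (throughStrings s A).Nonempty ↔ 2 * #A < #s := by
  have hsub : A.biUnion id ⊆ s := biUnion_subset.2 hA.subset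
  rw [← card_pos, throughStrings, card_sdiff_of_subset hsub, hA.card_biUnion]
  have := hA.two_mul_card_le
  omega

lemma notMem_of_forall_lt (hA : IsHalfDiagram s A) (hm : ∀ x ∈ s, x < m) :
    ∀ a ∈ A, m ∉ a :=
  fun a ha hma => lt_irrefl m (hm m (hA.subset a ha hma))

end IsHalfDiagram

lemma isHalfDiagram_insert_iff (hm : ∀ x ∈ s, x < m) (hA : ∀ a ∈ A, m ∉ a) :
    IsHalfDiagram (insert m s) A ↔ IsHalfDiagram s A := by
  constructor
  · intro h
    refine ⟨fun a ha x hx => ?_, h.card_eq_two, h.pairwiseDisjoint, h.noncrossing,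
      fun a ha i j hi hj k hk => h.not_free_inside a ha i j hi hj k (mem_insert_of_mem hk)⟩
    rcases mem_insert.1 (h.subset a ha hx) with rfl | hxs
    exacts [absurd hx (hA a ha), hxs]
  · intro h
    refine ⟨fun a ha => (h.subset a ha).trans (subset_insert _ _), h.card_eq_two,
      h.pairwiseDisjoint, h.noncrossing, fun a ha i j hi hj k hk hfree hik hkj => ?_⟩
    rcases mem_insert.1 hk with rfl | hks
    · exact lt_asymm hkj (hm j (h.subset a ha hj))
    · exact h.not_free_inside a ha i j hi hj k hks hfree hik hkj

lemma IsHalfDiagram.insert_arc (hB : IsHalfDiagram s B) (hm : ∀ x ∈ s, x < m)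
    (ht : IsGreatest (throughStrings s B : Set α) t) :
    IsHalfDiagram (insert m s) (insert {t, m} B) := by
  obtain ⟨hts, htB⟩ := mem_throughStrings.1 ht.1
  have htm : t < m := hm t hts
  have hmB := hB.notMem_of_forall_lt hm
  refine ⟨(forall_mem_insert _ _ _).2
    ⟨?_, fun b hb => (hB.subset b hb).trans (subset_insert _ _)⟩,
    (forall_mem_insert _ _ _).2 ⟨card_pair htm.ne, hB.card_eq_two⟩, ?_, ?_, ?_⟩
  · exact insert_subset (mem_insert_of_mem hts) (singleton_subset_iff.2 (mem_insert_self _ _))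
  · rw [coe_insert]
    refine hB.pairwiseDisjoint.insert fun b hb _ => ?_
    simp [htB b hb, hmB b hb]
  · intro a ha b hb i j k l hi hj hk hl hik hkj hjl
    rcases mem_insert.1 ha with rfl | haB <;> rcases mem_insert.1 hb with rfl | hbB
    · obtain ⟨-, rfl⟩ := eq_and_eq_of_mem_pair_of_lt htm hi hk hik
      obtain ⟨rfl, -⟩ := eq_and_eq_of_mem_pair_of_lt htm hk hj hkj
      exact lt_irrefl _ htm
    · obtain ⟨-, rfl⟩ := eq_and_eq_of_mem_pair_of_lt htm hi hj (hik.trans hkj)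
      exact lt_asymm hjl (hm l (hB.subset b hbB hl))
    · obtain ⟨rfl, -⟩ := eq_and_eq_of_mem_pair_of_lt htm hk hl (hkj.trans hjl)
      exact hB.not_free_inside a haB i j hi hj k hts htB hik hkj
    · exact hB.noncrossing a haB b hbB i j k l hi hj hk hl hik hkj hjl
  · intro a ha i j hi hj k hk hfree hik hkj
    have hkB : ∀ b ∈ B, k ∉ b := fun b hb => hfree b (mem_insert_of_mem hb)
    have hktm : k ∉ ({t, m} : Finset α) := hfree _ (mem_insert_self _ _)
    have hks : k ∈ s := by
      rcases mem_insert.1 hk with rfl | hks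
      exacts [absurd (mem_insert_of_mem (mem_singleton_self k)) hktm, hks]
    rcases mem_insert.1 ha with rfl | haB
    · obtain ⟨rfl, -⟩ := eq_and_eq_of_mem_pair_of_lt htm hi hj (hik.trans hkj)
      exact not_le.2 hik (ht.2 (mem_throughStrings.2 ⟨hks, hkB⟩))
    · exact hB.not_free_inside a haB i j hi hj k hks hkB hik hkj

lemma IsHalfDiagram.erase_arc (hA : IsHalfDiagram (insert m s) A) (hm : ∀ x ∈ s, x < m)
    (ht : {t, m} ∈ A) :
    IsHalfDiagram s (A.erase {t, m}) ∧
      IsGreatest (throughStrings s (A.erase {t, m}) : Set α) t := by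
  have htm : t ≠ m := by
    rintro rfl
    simpa using hA.card_eq_two _ ht
  have hts : t ∈ s := (mem_insert.1 (hA.subset _ ht (mem_insert_self _ _))).resolve_left htm
  have hdisj : ∀ a ∈ A.erase {t, m}, Disjoint a {t, m} := fun a ha =>
    hA.pairwiseDisjoint (mem_of_mem_erase ha) ht (ne_of_mem_erase ha)
  have htA : ∀ a ∈ A.erase {t, m}, t ∉ a := fun a ha hta =>
    disjoint_left.1 (hdisj a ha) hta (mem_insert_self _ _)
  have hsub : ∀ a ∈ A.erase {t, m}, a ⊆ s := fun a ha x hx =>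
    (mem_insert.1 (hA.subset a (mem_of_mem_erase ha) hx)).resolve_left fun hxm =>
      disjoint_left.1 (hdisj a ha) hx (by simp [hxm])
  have hfreeA : ∀ k, k ≠ t → k ≠ m →
      (∀ a ∈ A.erase {t, m}, k ∉ a) → ∀ a ∈ A, k ∉ a := by
    intro k hkt hkm hfree a ha
    by_cases hat : a = {t, m}
    · simp [hat, hkt, hkm]
    · exact hfree a (mem_erase.2 ⟨hat, ha⟩)
  have hmax : ∀ k ∈ s, (∀ a ∈ A.erase {t, m}, k ∉ a) → k ≤ t := by
    intro k hk hfree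
    by_contra! htk
    have hkm := hm k hk
    exact hA.not_free_inside _ ht t m (mem_insert_self _ _)
      (mem_insert_of_mem (mem_singleton_self m)) k (mem_insert_of_mem hk)
      (hfreeA k htk.ne' hkm.ne hfree) htk hkm
  refine ⟨⟨hsub, fun a ha => hA.card_eq_two a (mem_of_mem_erase ha),
    hA.pairwiseDisjoint.subset (coe_subset.2 (erase_subset _ _)),
    fun a ha b hb => hA.noncrossing a (mem_of_mem_erase ha) b (mem_of_mem_erase hb),
    fun a ha i j hi hj k hk hfree hik hkj => ?_⟩,
    mem_throughStrings.2 ⟨hts, htA⟩, fun k hk => hmax k (mem_throughStrings.1 hk).1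
      (mem_throughStrings.1 hk).2⟩
  rcases eq_or_ne k t with rfl | hkt
  · -- a free `t` inside `a` would make `a` cross the arc `{t, m}`
    exact hA.noncrossing a (mem_of_mem_erase ha) _ ht i j k m hi hj (mem_insert_self _ _)
      (mem_insert_of_mem (mem_singleton_self m)) hik hkj (hm j (hsub a ha hj))
  · exact hA.not_free_inside a (mem_of_mem_erase ha) i j hi hj k (mem_insert_of_mem hk)
      (hfreeA k hkt (hm k hk).ne hfree) hik hkj

lemma filter_insert_arc (hmB : ∀ b ∈ B, m ∉ b) :
    (insert {t, m} B).filter (fun a => m ∉ a) = B := by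
  rw [filter_insert, if_neg (by simp)]
  exact filter_true_of_mem hmB

open Classical in
noncomputable def halfDiagrams (s : Finset α) (p : ℕ) : Finset (Finset (Finset α)) :=
  s.powerset.powerset.filter fun A => IsHalfDiagram s A ∧ #A = p

lemma mem_halfDiagrams {p : ℕ} : A ∈ halfDiagrams s p ↔ IsHalfDiagram s A ∧ #A = p := by
  simp only [halfDiagrams, mem_filter, mem_powerset, and_iff_right_iff_imp]
  exact fun h a ha => mem_powerset.2 (h.1.subset a ha)

lemma halfDiagrams_zero (s : Finset α) : halfDiagrams s 0 = {∅} := by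
  ext A
  simp only [mem_halfDiagrams, card_eq_zero, mem_singleton]
  constructor
  · exact And.right
  · rintro rfl
    exact ⟨isHalfDiagram_empty s, rfl⟩

lemma halfDiagrams_eq_empty {p : ℕ} (hp : #s < 2 * p) : halfDiagrams s p = ∅ :=
  eq_empty_of_forall_notMem fun A hA => by
    obtain ⟨hA, hcard⟩ := mem_halfDiagrams.1 hA
    exact absurd (hcard ▸ hA.two_mul_card_le) (not_le.2 hp)

lemma filter_free_halfDiagrams_insert (hm : ∀ x ∈ s, x < m) (p : ℕ) :
    (halfDiagrams (insert m s) p).filter (fun A => ∀ a ∈ A, m ∉ a) = halfDiagrams s p := by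
  ext A
  simp only [mem_filter, mem_halfDiagrams]
  constructor
  · rintro ⟨⟨hA, hp⟩, hfree⟩
    exact ⟨(isHalfDiagram_insert_iff hm hfree).1 hA, hp⟩
  · rintro ⟨hA, hp⟩
    have hfree := hA.notMem_of_forall_lt hm
    exact ⟨⟨(isHalfDiagram_insert_iff hm hfree).2 hA, hp⟩, hfree⟩

lemma exists_eq_pair_of_mem (ha : #a = 2) (hma : m ∈ a) : ∃ t, a = {t, m} := by
  obtain ⟨t, ht⟩ := card_eq_one.1 (by rw [card_erase_of_mem hma, ha] : #(a.erase m) = 1)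
  exact ⟨t, by rw [← insert_erase hma, ht, pair_comm]⟩

lemma card_filter_matched_halfDiagrams_insert (hm : ∀ x ∈ s, x < m) (p : ℕ) :
    #((halfDiagrams (insert m s) (p + 1)).filter (fun A => ¬ ∀ a ∈ A, m ∉ a)) =
      #((halfDiagrams s p).filter (fun B => (throughStrings s B).Nonempty)) := by
  symm
  refine card_bij (fun B hB => insert {(throughStrings s B).max' (mem_filter.1 hB).2, m} B)
    ?_ ?_ ?_
  · intro B hB
    obtain ⟨hB, hne⟩ := mem_filter.1 hB
    obtain ⟨hB, hcard⟩ := mem_halfDiagrams.1 hB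
    have hmB := hB.notMem_of_forall_lt hm
    refine mem_filter.2
      ⟨mem_halfDiagrams.2 ⟨hB.insert_arc hm (isGreatest_max' _ hne), ?_⟩, ?_⟩
    · rw [card_insert_of_notMem fun h => hmB _ h (mem_insert_of_mem (mem_singleton_self m)),
        hcard]
    · exact fun h => h _ (mem_insert_self _ _) (mem_insert_of_mem (mem_singleton_self m))
  · intro B hB B' hB' h
    rw [← filter_insert_arc ((mem_halfDiagrams.1 (mem_filter.1 hB).1).1.notMem_of_forall_lt hm),
      h, filter_insert_arc ((mem_halfDiagrams.1 (mem_filter.1 hB').1).1.notMem_of_forall_lt hm)]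
  · intro A hA
    obtain ⟨hA, hmatched⟩ := mem_filter.1 hA
    obtain ⟨hA, hp⟩ := mem_halfDiagrams.1 hA
    push Not at hmatched
    obtain ⟨a, ha, hma⟩ := hmatched
    obtain ⟨t, rfl⟩ := exists_eq_pair_of_mem (hA.card_eq_two a ha) hma
    obtain ⟨hB, hgreat⟩ := hA.erase_arc hm ha
    have hne : (throughStrings s (A.erase {t, m})).Nonempty := ⟨t, hgreat.1⟩
    refine ⟨A.erase {t, m}, mem_filter.2 ⟨mem_halfDiagrams.2 ⟨hB, ?_⟩, hne⟩, ?_⟩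
    · rw [card_erase_of_mem ha, hp, Nat.add_sub_cancel]
    · rw [(isGreatest_max' _ hne).unique hgreat, insert_erase ha]

lemma filter_nonempty_throughStrings_halfDiagrams (p : ℕ) :
    (halfDiagrams s p).filter (fun B => (throughStrings s B).Nonempty) =
      if 2 * p < #s then halfDiagrams s p else ∅ := by
  split_ifs with h
  · refine filter_true_of_mem fun B hB => ?_
    obtain ⟨hB, hcard⟩ := mem_halfDiagrams.1 hB
    exact hB.throughStrings_nonempty_iff.2 (hcard ▸ h)
  · refine filter_false_of_mem fun B hB => ?_
    obtain ⟨hB, hcard⟩ := mem_halfDiagrams.1 hB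
    exact mt hB.throughStrings_nonempty_iff.1 (hcard ▸ h)

lemma card_halfDiagrams_insert_succ (hm : ∀ x ∈ s, x < m) (p : ℕ) :
    #(halfDiagrams (insert m s) (p + 1)) =
      #(halfDiagrams s (p + 1)) + if 2 * p < #s then #(halfDiagrams s p) else 0 := by
  rw [← card_filter_add_card_filter_not (fun A => ∀ a ∈ A, m ∉ a),
    filter_free_halfDiagrams_insert hm, card_filter_matched_halfDiagrams_insert hm,
    filter_nonempty_throughStrings_halfDiagrams, apply_ite card, card_empty]

lemma choose_succ_left_eq (n q : ℕ) :
    (n + 1).choose q = n.choose q + if q = 0 then 0 else n.choose (q - 1) := by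
  cases q with
  | zero => simp
  | succ q => rw [Nat.choose_succ_succ, if_neg q.succ_ne_zero, Nat.add_sub_cancel, add_comm]

theorem card_halfDiagrams_add_choose (s : Finset α) (p : ℕ) (hp : 2 * p ≤ #s) :
    #(halfDiagrams s p) + (if p = 0 then 0 else (#s).choose (p - 1)) = (#s).choose p := by
  induction s using Finset.induction_on_max generalizing p with
  | empty =>
    obtain rfl : p = 0 := by simpa using hp
    simp [halfDiagrams_zero]
  | insert m s hm ih =>
    rw [card_insert_of_notMem fun h => lt_irrefl m (hm m h)] at hp ⊢
    set n := #s
    cases p with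
    | zero => simp [halfDiagrams_zero]
    | succ q =>
      have ihq := ih q (by omega)
      rw [card_halfDiagrams_insert_succ hm, if_pos (by omega), if_neg q.succ_ne_zero,
        Nat.add_sub_cancel, choose_succ_left_eq, Nat.choose_succ_succ']
      rcases Nat.lt_or_ge n (2 * (q + 1)) with hn | hn
      · have hsymm := Nat.choose_symm_half q
        rw [show 2 * q + 1 = n by omega] at hsymm
        rw [halfDiagrams_eq_empty hn, card_empty, hsymm]
        omega
      · have ihq1 := ih (q + 1) hn
        rw [if_neg q.succ_ne_zero, Nat.add_sub_cancel] at ihq1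
        omega

end HalfDiagram

lemma HalfDiag.arcs_injective {n : ℕ} : Function.Injective (HalfDiag.arcs (n := n)) := by
  rintro ⟨⟩ ⟨⟩ rfl
  rfl

lemma HalfDiag.exists_arcs_eq_iff {n : ℕ} {A : Finset (Finset (Fin n))} :
    (∃ d : HalfDiag n, d.arcs = A) ↔ IsHalfDiagram univ A := by
  constructor
  · rintro ⟨d, rfl⟩
    exact ⟨fun _ _ => subset_univ _, d.two, d.disj, d.nc1,
      fun a ha i j hi hj k _ => d.nc2 a ha i j hi hj k⟩
  · intro hA
    exact ⟨⟨A, hA.card_eq_two, hA.pairwiseDisjoint, hA.noncrossing,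
      fun a ha i j hi hj k => hA.not_free_inside a ha i j hi hj k (mem_univ k)⟩, rfl⟩

lemma ncard_halfDiag_eq (n p : ℕ) :
    {a : HalfDiag n | a.arcs.card = p}.ncard = #(halfDiagrams (univ : Finset (Fin n)) p) := by
  rw [← Set.ncard_coe_finset, ← Set.ncard_image_of_injective _ HalfDiag.arcs_injective]
  congr 1
  ext A
  simp only [Set.mem_image, Set.mem_ofPred_eq, mem_coe, mem_halfDiagrams,
    ← HalfDiag.exists_arcs_eq_iff]
  constructor
  · rintro ⟨d, hd, rfl⟩
    exact ⟨⟨d, rfl⟩, hd⟩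
  · rintro ⟨⟨d, rfl⟩, hd⟩
    exact ⟨d, hd, rfl⟩

theorem card_halfDiag (n p : ℕ) (h : 2 * p ≤ n) :
    {a : HalfDiag n | a.arcs.card = p}.ncard
      = n.choose p - (if p = 0 then 0 else n.choose (p - 1)) := by
  have key := card_halfDiagrams_add_choose (univ : Finset (Fin n)) p (by simpa using h)
  rw [card_univ, Fintype.card_fin] at key
  rw [ncard_halfDiag_eq]
  omega
end

section
/- For natural numbers n and p with 2p ≤ n, let ε and δ be ballot sequences of length n, each with p down-steps, and suppose h_i(ε) ≤ h_i(δ) for all 1 ≤ i ≤ n, where h_i denotes the i-th partial sum. Then δ can be obtained from ε by a finite sequence of box additions, and every sequence of box additions transforming ε into δ has length exactly (1/2)·Σ_{i=1}^n (h_i(δ) − h_i(ε)). -/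
open scoped BigOperators

/-- The partial sum `h_i(ε) = ε_1 + … + ε_i`. -/
def psum {n : ℕ} (ε : Fin n → ℤ) (i : Fin n) : ℤ :=
  ∑ j ∈ Finset.univ.filter (fun j => j ≤ i), ε j

/-- `δ` is obtained from `ε` by a single box addition: at some minimum `(i, i+1)`
(a `-1` followed by a `+1`), the pair is replaced by `(+1, -1)`. -/
def BallotBoxAdd {n : ℕ} (ε δ : Fin n → ℤ) : Prop :=
  ∃ (i : Fin n) (h : (i : ℕ) + 1 < n),
    ε i = -1 ∧ ε ⟨(i : ℕ) + 1, h⟩ = 1 ∧ δ i = 1 ∧ δ ⟨(i : ℕ) + 1, h⟩ = -1 ∧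
    ∀ j : Fin n, j ≠ i → j ≠ ⟨(i : ℕ) + 1, h⟩ → δ j = ε j

lemma psum_zero {n : ℕ} (ε : Fin n → ℤ) (h : 0 < n) :
    psum ε ⟨0, h⟩ = ε ⟨0, h⟩ := by
  unfold psum
  have hs : (Finset.univ.filter fun j => j ≤ (⟨0, h⟩ : Fin n)) = {⟨0, h⟩} := by
    ext k
    simp [Fin.le_def, Fin.ext_iff]
  rw [hs, Finset.sum_singleton]

lemma psum_succ {n : ℕ} (ε : Fin n → ℤ) (m : ℕ) (h1 : m < n) (h : m + 1 < n) :
    psum ε ⟨m + 1, h⟩ = psum ε ⟨m, h1⟩ + ε ⟨m + 1, h⟩ := by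
  unfold psum
  have hs : (Finset.univ.filter fun j => j ≤ (⟨m + 1, h⟩ : Fin n))
      = insert ⟨m + 1, h⟩ (Finset.univ.filter fun j => j ≤ (⟨m, h1⟩ : Fin n)) := by
    ext k
    simp [Fin.le_def, Fin.ext_iff]
    omega
  have hn : (⟨m + 1, h⟩ : Fin n) ∉ (Finset.univ.filter fun j => j ≤ (⟨m, h1⟩ : Fin n)) := by
    simp [Fin.le_def]
  rw [hs, Finset.sum_insert hn]
  ring

lemma psum_box {n : ℕ} {ε δ : Fin n → ℤ} {i : Fin n} (h : (i : ℕ) + 1 < n)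
    (h1 : ε i = -1) (h2 : ε ⟨(i : ℕ) + 1, h⟩ = 1) (h3 : δ i = 1)
    (h4 : δ ⟨(i : ℕ) + 1, h⟩ = -1)
    (h5 : ∀ j : Fin n, j ≠ i → j ≠ ⟨(i : ℕ) + 1, h⟩ → δ j = ε j) :
    ∀ k : Fin n, psum δ k = psum ε k + (if k = i then 2 else 0) := by
  have hne : i ≠ (⟨(i : ℕ) + 1, h⟩ : Fin n) := by
    simp [Fin.ext_iff]
  have hval : ∀ j : Fin n, δ j = ε j + ((if j = i then (2:ℤ) else 0) +
      (if j = (⟨(i : ℕ) + 1, h⟩ : Fin n) then (-2:ℤ) else 0)) := by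
    intro j
    by_cases hj : j = i
    · subst hj; simp [hne, h1, h3]
    · by_cases hj' : j = (⟨(i : ℕ) + 1, h⟩ : Fin n)
      · subst hj'; simp [hj, h2, h4]
      · simp [hj, hj', h5 j hj hj']
  intro k
  unfold psum
  rw [Finset.sum_congr rfl (fun j _ => hval j), Finset.sum_add_distrib,
    Finset.sum_add_distrib, Finset.sum_ite_eq', Finset.sum_ite_eq']
  simp only [Finset.mem_filter, Finset.mem_univ, true_and]
  by_cases hk : k = i
  · subst hk
    have : ¬ ((⟨(k : ℕ) + 1, h⟩ : Fin n) ≤ k) := by simp [Fin.le_def]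
    simp [this]
  · by_cases hik : i ≤ k
    · have : (⟨(i : ℕ) + 1, h⟩ : Fin n) ≤ k := by
        rw [Fin.le_def]
        rcases Fin.lt_or_lt_of_ne (Ne.symm hk) with h' | h'
        · exact h'
        · exact absurd hik (not_le.mpr h')
      simp [hik, this, hk]
    · have : ¬ ((⟨(i : ℕ) + 1, h⟩ : Fin n) ≤ k) := by
        simp only [Fin.le_def, Fin.val_mk] at hik ⊢; omega
      simp [hik, this, hk]

lemma sum_psum_box {n : ℕ} {ε δ : Fin n → ℤ} (hbox : BallotBoxAdd ε δ) :
    ∑ k : Fin n, psum δ k = (∑ k : Fin n, psum ε k) + 2 := by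
  obtain ⟨i, h, h1, h2, h3, h4, h5⟩ := hbox
  have := psum_box h h1 h2 h3 h4 h5
  rw [Finset.sum_congr rfl (fun k _ => this k), Finset.sum_add_distrib,
    Finset.sum_ite_eq']
  simp

lemma psum_inj {n : ℕ} {ε δ : Fin n → ℤ} (h : ∀ i, psum ε i = psum δ i) : ε = δ := by
  have key : ∀ m : ℕ, ∀ hm : m < n, ε ⟨m, hm⟩ = δ ⟨m, hm⟩ := by
    intro m
    induction m with
    | zero => intro hm; have := h ⟨0, hm⟩; rwa [psum_zero, psum_zero] at this
    | succ m ih =>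
      intro hm
      have h1 := h ⟨m + 1, hm⟩
      have h2 := h ⟨m, by omega⟩
      rw [psum_succ ε m (by omega) hm, psum_succ δ m (by omega) hm, h2] at h1
      linarith
  funext i
  have := key i.val i.isLt
  simpa using this

lemma even_psum_sub {n : ℕ} {ε δ : Fin n → ℤ} (hε : ∀ i, ε i = 1 ∨ ε i = -1)
    (hδ : ∀ i, δ i = 1 ∨ δ i = -1) (k : Fin n) : Even (psum δ k - psum ε k) := by
  unfold psum
  rw [← Finset.sum_sub_distrib]
  apply Finset.even_sum
  intro j _
  rcases hε j with h1 | h1 <;> rcases hδ j with h2 | h2 <;> rw [h1, h2] <;> decide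

lemma psum_last {n p : ℕ} {ε : Fin n → ℤ} (hε : IsBallot n p ε) (h : 0 < n) :
    psum ε ⟨n - 1, by omega⟩ = (n : ℤ) - 2 * p := by
  obtain ⟨h1, h2, _⟩ := hε
  unfold psum
  have hs : (Finset.univ.filter fun j => j ≤ (⟨n - 1, by omega⟩ : Fin n)) = Finset.univ := by
    ext k
    simp [Fin.le_def]
    omega
  rw [hs]
  have hval : ∀ j : Fin n, ε j = 1 - 2 * (if ε j = -1 then (1:ℤ) else 0) := by
    intro j
    rcases h1 j with h' | h' <;> simp [h']
  rw [Finset.sum_congr rfl (fun j _ => hval j), Finset.sum_sub_distrib]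
  rw [← Finset.mul_sum, ← Finset.sum_filter]
  simp [h2]

lemma descend {n : ℕ} (ε δ : Fin n → ℤ) (hε1 : ∀ i, ε i = 1 ∨ ε i = -1)
    (hδ1 : ∀ i, δ i = 1 ∨ δ i = -1) :
    ∀ m : ℕ, ∀ (hm1 : m < n) (hm : m + 1 < n), ε ⟨m + 1, hm⟩ = 1 →
      psum ε ⟨m, hm1⟩ + 2 ≤ psum δ ⟨m, hm1⟩ →
      ∃ (j : Fin n) (hj : (j : ℕ) + 1 < n),
        ε j = -1 ∧ ε ⟨(j : ℕ) + 1, hj⟩ = 1 ∧ psum ε j + 2 ≤ psum δ j := by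
  intro m
  induction m with
  | zero =>
    intro hm1 hm hnext hstrict
    rcases hε1 ⟨0, hm1⟩ with h' | h'
    · exfalso
      rw [psum_zero ε, psum_zero δ, h'] at hstrict
      rcases hδ1 ⟨0, hm1⟩ with h'' | h'' <;> omega
    · exact ⟨⟨0, hm1⟩, hm, h', hnext, hstrict⟩
  | succ m ih =>
    intro hm1 hm hnext hstrict
    rcases hε1 ⟨m + 1, hm1⟩ with h' | h'
    · have hmn : m < n := by omega
      have e1 := psum_succ ε m hmn hm1
      have e2 := psum_succ δ m hmn hm1
      refine ih hmn hm1 h' ?_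
      rcases hδ1 ⟨m + 1, hm1⟩ with h'' | h'' <;> linarith [hstrict, e1, e2, h', h'']
    · exact ⟨⟨m + 1, hm1⟩, hm, h', hnext, hstrict⟩

lemma step_lemma {n p : ℕ} {ε δ : Fin n → ℤ} (hε : IsBallot n p ε) (hδ : IsBallot n p δ)
    (hle : ∀ i, psum ε i ≤ psum δ i) (hne : ∃ i, psum ε i < psum δ i) :
    ∃ ε' : Fin n → ℤ, BallotBoxAdd ε ε' ∧ IsBallot n p ε' ∧ ∀ i, psum ε' i ≤ psum δ i := by
  classical
  have hn : 0 < n := by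
    obtain ⟨i, _⟩ := hne; exact i.pos
  set s : Finset (Fin n) := Finset.univ.filter (fun i => psum ε i < psum δ i) with hsdef
  have hsne : s.Nonempty := by
    obtain ⟨i, hi⟩ := hne
    exact ⟨i, by simp [hsdef, hi]⟩
  set i₀ : Fin n := s.max' hsne with hi₀def
  have hi₀mem : i₀ ∈ s := s.max'_mem hsne
  have hi₀lt : psum ε i₀ < psum δ i₀ := by
    have := hi₀mem; simp [hsdef] at this; exact this
  -- strictness with gap 2 via evenness
  have hstrict : ∀ k : Fin n, psum ε k < psum δ k → psum ε k + 2 ≤ psum δ k := by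
    intro k hk
    have hev := even_psum_sub hε.1 hδ.1 k
    obtain ⟨t, ht⟩ := hev
    omega
  -- i₀ is not the last index
  have hlast : psum ε ⟨n - 1, by omega⟩ = psum δ ⟨n - 1, by omega⟩ := by
    rw [psum_last hε hn, psum_last hδ hn]
  have hi₀ne : (i₀ : ℕ) ≠ n - 1 := by
    intro hcon
    have : i₀ = (⟨n - 1, by omega⟩ : Fin n) := Fin.ext hcon
    rw [this, hlast] at hi₀lt
    exact lt_irrefl _ hi₀lt
  have hi₀succ : (i₀ : ℕ) + 1 < n := by
    have := i₀.isLt; omega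
  set i₁ : Fin n := ⟨(i₀ : ℕ) + 1, hi₀succ⟩ with hi₁def
  have hi₁eq : psum ε i₁ = psum δ i₁ := by
    by_contra hcon
    have hmem : i₁ ∈ s := by
      simp [hsdef]
      exact lt_of_le_of_ne (hle i₁) hcon
    have := s.le_max' i₁ hmem
    rw [← hi₀def] at this
    have : (i₁ : ℕ) ≤ (i₀ : ℕ) := this
    simp [hi₁def] at this
  -- ε at i₁ = 1
  have hεi₁ : ε i₁ = 1 := by
    have e1 : psum ε i₁ = psum ε ⟨(i₀ : ℕ), by omega⟩ + ε i₁ := psum_succ ε (i₀ : ℕ) (by omega) hi₀succ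
    have e2 : psum δ i₁ = psum δ ⟨(i₀ : ℕ), by omega⟩ + δ i₁ := psum_succ δ (i₀ : ℕ) (by omega) hi₀succ
    have hmk : (⟨(i₀ : ℕ), by omega⟩ : Fin n) = i₀ := Fin.ext rfl
    rw [hmk] at e1 e2
    have hgap := hstrict i₀ hi₀lt
    rcases hε.1 i₁ with h' | h'
    · exact h'
    · exfalso
      rcases hδ.1 i₁ with h'' | h'' <;> rw [e1, e2, h', h''] at hi₁eq <;> omega
  -- apply descend at i₀
  have hmk : (⟨(i₀ : ℕ), by omega⟩ : Fin n) = i₀ := Fin.ext rfl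
  obtain ⟨j, hj, hj1, hj2, hj3⟩ := descend ε δ hε.1 hδ.1 (i₀ : ℕ) i₀.isLt hi₀succ
    (show ε i₁ = 1 from hεi₁)
    (by rw [show (⟨(i₀:ℕ), i₀.isLt⟩ : Fin n) = i₀ from Fin.ext rfl]; exact hstrict i₀ hi₀lt)
  set j₁ : Fin n := ⟨(j : ℕ) + 1, hj⟩ with hj₁def
  have hjne : j ≠ j₁ := by simp [hj₁def, Fin.ext_iff]
  set ε' : Fin n → ℤ := fun k => if k = j then 1 else if k = j₁ then -1 else ε k with hε'def
  have hε'j : ε' j = 1 := by simp [hε'def]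
  have hε'j₁ : ε' j₁ = -1 := by simp [hε'def, Ne.symm hjne]
  have hε'other : ∀ k, k ≠ j → k ≠ j₁ → ε' k = ε k := by
    intro k h1 h2; simp [hε'def, h1, h2]
  have hbox : BallotBoxAdd ε ε' := ⟨j, hj, hj1, hj2, hε'j, hε'j₁, hε'other⟩
  have hpsum : ∀ k : Fin n, psum ε' k = psum ε k + (if k = j then 2 else 0) :=
    psum_box hj hj1 hj2 hε'j hε'j₁ hε'other
  refine ⟨ε', hbox, ⟨?_, ?_, ?_⟩, ?_⟩
  · intro k
    by_cases h1 : k = j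
    · subst h1; rw [hε'j]; left; rfl
    · by_cases h2 : k = j₁
      · subst h2; rw [hε'j₁]; right; rfl
      · rw [hε'other k h1 h2]; exact hε.1 k
  · -- cardinality
    have hset : (Finset.univ.filter fun k => ε' k = -1)
        = insert j₁ ((Finset.univ.filter fun k => ε k = -1).erase j) := by
      ext k
      simp only [Finset.mem_filter, Finset.mem_univ, true_and, Finset.mem_insert,
        Finset.mem_erase]
      constructor
      · intro hk
        by_cases h1 : k = j
        · subst h1; rw [hε'j] at hk; omega
        · by_cases h2 : k = j₁
          · exact Or.inl h2
          · rw [hε'other k h1 h2] at hk; exact Or.inr ⟨h1, hk⟩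
      · rintro (h1 | ⟨h1, h2⟩)
        · subst h1; exact hε'j₁
        · by_cases h2' : k = j₁
          · subst h2'; exact hε'j₁
          · rw [hε'other k h1 h2']; exact h2
    rw [hset]
    have hjmem : j ∈ (Finset.univ.filter fun k => ε k = -1) := by simp [hj1]
    have hj₁notmem : j₁ ∉ (Finset.univ.filter fun k => ε k = -1).erase j := by
      simp [hj2]
    rw [Finset.card_insert_of_notMem hj₁notmem, Finset.card_erase_of_mem hjmem, hε.2.1]
    have : 1 ≤ p := by
      rw [← hε.2.1]
      exact Finset.card_pos.mpr ⟨j, hjmem⟩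
    omega
  · -- nonneg partial sums
    intro k
    have h1 : (0:ℤ) ≤ psum ε k := hε.2.2 k
    have h2 := hpsum k
    show (0:ℤ) ≤ psum ε' k
    by_cases hk : k = j
    · subst hk; simp at h2; linarith
    · simp only [if_neg hk] at h2; linarith
  · intro k
    rw [hpsum k]
    by_cases hk : k = j
    · subst hk; simpa using hj3
    · simpa [hk] using hle k

lemma chain_sum {n : ℕ} : ∀ (r : ℕ) (c : ℕ → Fin n → ℤ),
    (∀ k < r, BallotBoxAdd (c k) (c (k + 1))) →
    ∑ i : Fin n, psum (c r) i = (∑ i : Fin n, psum (c 0) i) + 2 * r := by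
  intro r
  induction r with
  | zero => intro c _; simp
  | succ r ih =>
    intro c hc
    have h1 := ih c (fun k hk => hc k (by omega))
    have h2 := sum_psum_box (hc r (by omega))
    rw [h2, h1]
    push_cast
    ring

lemma exists_chain {n p : ℕ} (δ : Fin n → ℤ) (hδ : IsBallot n p δ) :
    ∀ S : ℕ, ∀ ε : Fin n → ℤ, IsBallot n p ε → (∀ i, psum ε i ≤ psum δ i) →
      (∑ i : Fin n, (psum δ i - psum ε i)) = (S : ℤ) →
      ∃ (r : ℕ) (c : ℕ → Fin n → ℤ), c 0 = ε ∧ c r = δ ∧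
        ∀ k < r, BallotBoxAdd (c k) (c (k + 1)) := by
  intro S
  induction S using Nat.strong_induction_on with
  | _ S ih =>
    intro ε hε hle hsum
    by_cases hcase : ∀ i, psum ε i = psum δ i
    · have : ε = δ := psum_inj hcase
      exact ⟨0, fun _ => ε, rfl, by rw [this], fun k hk => absurd hk (by omega)⟩
    · push_neg at hcase
      obtain ⟨i, hi⟩ := hcase
      have hne : ∃ i, psum ε i < psum δ i := ⟨i, lt_of_le_of_ne (hle i) hi⟩
      obtain ⟨ε', hbox, hε', hle'⟩ := step_lemma hε hδ hle hne
      obtain ⟨i₀, h, h1, h2, h3, h4, h5⟩ := hbox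
      have hpsum := psum_box h h1 h2 h3 h4 h5
      -- new sum is S - 2
      have hsum' : (∑ i : Fin n, (psum δ i - psum ε' i))
          = (∑ i : Fin n, (psum δ i - psum ε i)) - 2 := by
        have : ∀ i : Fin n, psum δ i - psum ε' i
            = (psum δ i - psum ε i) - (if i = i₀ then 2 else 0) := by
          intro i; rw [hpsum i]; ring
        rw [Finset.sum_congr rfl (fun i _ => this i), Finset.sum_sub_distrib,
          Finset.sum_ite_eq']
        simp
      have hnonneg : (0:ℤ) ≤ ∑ i : Fin n, (psum δ i - psum ε' i) :=
        Finset.sum_nonneg (fun i _ => by linarith [hle' i])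
      have hS2 : 2 ≤ S := by
        rw [hsum', hsum] at hnonneg
        exact_mod_cast by omega
      have hsum'' : (∑ i : Fin n, (psum δ i - psum ε' i)) = ((S - 2 : ℕ) : ℤ) := by
        rw [hsum', hsum]
        push_cast [hS2]
        ring
      obtain ⟨r, c, hc0, hcr, hcstep⟩ := ih (S - 2) (by omega) ε' hε' hle' hsum''
      refine ⟨r + 1, fun k => if k = 0 then ε else c (k - 1), by simp, by simp [hcr], ?_⟩
      intro k hk
      match k with
      | 0 =>
        show BallotBoxAdd ε (c 0)
        rw [hc0]
        exact ⟨i₀, h, h1, h2, h3, h4, h5⟩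
      | (m + 1) =>
        show BallotBoxAdd (c m) (c (m + 1))
        exact hcstep m (by omega)

/-- If `δ` dominates `ε` (heights everywhere at least as large), then `δ` is obtained
from `ε` by finitely many box additions, and every such sequence of box additions
has length exactly `(1/2)·Σᵢ (hᵢ(δ) − hᵢ(ε))`. -/
theorem boxAdd_chain_exists_and_length (n p : ℕ) (h2p : 2 * p ≤ n)
    (ε δ : Fin n → ℤ) (hε : IsBallot n p ε) (hδ : IsBallot n p δ)
    (hle : ∀ i : Fin n, psum ε i ≤ psum δ i) :
    (∃ (r : ℕ) (c : ℕ → Fin n → ℤ), c 0 = ε ∧ c r = δ ∧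
        ∀ k < r, BallotBoxAdd (c k) (c (k + 1))) ∧
    (∀ (r : ℕ) (c : ℕ → Fin n → ℤ), c 0 = ε → c r = δ →
        (∀ k < r, BallotBoxAdd (c k) (c (k + 1))) →
        2 * (r : ℤ) = ∑ i : Fin n, (psum δ i - psum ε i)) := by
  constructor
  · have hnonneg : (0:ℤ) ≤ ∑ i : Fin n, (psum δ i - psum ε i) :=
      Finset.sum_nonneg (fun i _ => by linarith [hle i])
    exact exists_chain δ hδ (∑ i : Fin n, (psum δ i - psum ε i)).toNat ε hε hle
      (by rw [Int.toNat_of_nonneg hnonneg])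
  · intro r c hc0 hcr hstep
    have := chain_sum r c hstep
    rw [hc0, hcr] at this
    rw [Finset.sum_sub_distrib, this]
    ring
end

section
/- For natural numbers n and p with 1 ≤ p and 2p ≤ n, the map sending a ballot sequence to its descent-height sequence is a bijection from the set of ballot sequences of length n with p down-steps onto the set of integer sequences (a_1,…,a_p) satisfying a_j ≥ 1 for all j, a_{j+1} ≥ a_j − 1 for all 1 ≤ j < p, and a_p ≤ n − 2p + 1. -/
open scoped BigOperators

/-- The descent-height sequence: the list of partial sums just before each
down-step, in increasing order of position. -/
def descHeights (n : ℕ) (ε : Fin n → ℤ) : List ℤ :=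
  ((List.finRange n).filter fun i => decide (ε i = -1)).map
    fun i => ∑ k ∈ Finset.univ.filter (fun k => k < i), ε k


/-!
A `±1` sequence with `p` down-steps is determined by their positions `t₀ < ⋯ < t_{p-1}`
(0-indexed), and the height just before the `j`-th down-step is `t_j - 2j`, because exactly `j`
of the earlier steps go down. Hence `t_j = a_j + 2j`: strict increase of `t` is
`a_{j+1} ≥ a_j - 1`, `t_{p-1} < n` is `a_{p-1} ≤ n - 2p + 1`, and the ballot condition, which
only has to be checked just after each down-step, is `t_j ≥ 2j + 1`, i.e. `a_j ≥ 1`.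
-/

open Finset

section DownSteps

variable {n p : ℕ}

def seqWithDownSteps (t : Fin p → Fin n) (i : Fin n) : ℤ :=
  if ∃ j, t j = i then -1 else 1

lemma seqWithDownSteps_eq_neg_one_iff {t : Fin p → Fin n} {i : Fin n} :
    seqWithDownSteps t i = -1 ↔ ∃ j, t j = i := by
  unfold seqWithDownSteps
  split_ifs <;> simp_all

lemma sum_seqWithDownSteps {t : Fin p → Fin n} (ht : Function.Injective t)
    (s : Finset (Fin n)) :
    ∑ k ∈ s, seqWithDownSteps t k = #s - 2 * #{j | t j ∈ s} := by
  have hdown : #{k ∈ s | ∃ j, t j = k} = #{j | t j ∈ s} := by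
    rw [← card_image_of_injective _ ht]
    congr 1
    ext k
    aesop
  have hsplit := card_filter_add_card_filter_not (s := s) (fun k => ∃ j, t j = k)
  simp only [seqWithDownSteps, sum_ite, sum_const, nsmul_eq_mul, mul_neg, mul_one] at *
  omega

lemma Fin.card_filter_lt (i : Fin n) : #{k | k < i} = (i : ℕ) := by
  rw [filter_gt_eq_Iio, Fin.card_Iio]

lemma Fin.card_filter_le (i : Fin n) : #{k | k ≤ i} = (i : ℕ) + 1 := by
  rw [filter_ge_eq_Iic, Fin.card_Iic]

variable {t : Fin p → Fin n}

lemma filter_seqWithDownSteps_eq_ofFn (ht : StrictMono t) :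
    (List.finRange n).filter (fun i => decide (seqWithDownSteps t i = -1)) = List.ofFn t :=
  ((List.pairwise_lt_finRange n).sublist List.filter_sublist).eq_of_mem_iff
    (List.pairwise_ofFn.2 fun _ _ h => ht h) fun i => by
    simp [seqWithDownSteps_eq_neg_one_iff, List.mem_ofFn]

lemma getD_descHeights_seqWithDownSteps (ht : StrictMono t) (j : Fin p) :
    (descHeights n (seqWithDownSteps t)).getD j 0 = (t j : ℤ) - 2 * j := by
  have hcount : #{k | t k < t j} = (j : ℕ) := by
    simp only [ht.lt_iff_lt, Fin.card_filter_lt]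
  simp [descHeights, filter_seqWithDownSteps_eq_ofFn ht, sum_seqWithDownSteps ht.injective,
    Fin.card_filter_lt, hcount]

lemma isBallot_seqWithDownSteps_iff (ht : StrictMono t) :
    IsBallot n p (seqWithDownSteps t) ↔ ∀ j : Fin p, 2 * (j : ℕ) + 1 ≤ t j := by
  constructor
  · rintro ⟨-, -, hnonneg⟩ j
    have hcount : #{k | t k ≤ t j} = (j : ℕ) + 1 := by
      simp only [ht.le_iff_le, Fin.card_filter_le]
    have := hnonneg (t j)
    simp only [sum_seqWithDownSteps ht.injective, Fin.card_filter_le, mem_filter_univ,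
      hcount] at this
    omega
  · intro hpos
    refine ⟨fun i => ?_, ?_, fun i => ?_⟩
    · unfold seqWithDownSteps
      split_ifs <;> simp
    · have himage : ({i | seqWithDownSteps t i = -1} : Finset (Fin n)) = univ.image t := by
        ext i
        simp [seqWithDownSteps_eq_neg_one_iff]
      rw [himage, card_image_of_injective _ ht.injective, card_fin]
    · have hcount : #{k | t k ≤ i} ≤ ((i : ℕ) + 1) / 2 := by
        simpa using card_le_card_of_injOn (t := range (((i : ℕ) + 1) / 2))
          (fun k : Fin p => (k : ℕ)) (fun k hk => by have := hpos k; simp at hk ⊢; omega)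
          Fin.val_injective.injOn
      simp only [sum_seqWithDownSteps ht.injective, Fin.card_filter_le, mem_filter_univ]
      omega

lemma exists_strictMono_seqWithDownSteps_eq {ε : Fin n → ℤ}
    (hε : ∀ i, ε i = 1 ∨ ε i = -1) (hp : #{i | ε i = -1} = p) :
    ∃ t : Fin p → Fin n, StrictMono t ∧ seqWithDownSteps t = ε := by
  refine ⟨_, (orderEmbOfFin _ hp).strictMono, funext fun i => ?_⟩
  have hrange : (∃ j, orderEmbOfFin _ hp j = i) ↔ ε i = -1 := by
    rw [← Set.mem_range, range_orderEmbOfFin]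
    simp
  unfold seqWithDownSteps
  split_ifs with h
  · exact (hrange.1 h).symm
  · exact ((hε i).resolve_right (mt hrange.2 h)).symm

end DownSteps

section RestrictedSeq

variable {n p : ℕ} {a : Fin p → ℤ}

lemma strictMono_add_two_mul
    (ha : ∀ (j : Fin p) (hj : (j : ℕ) + 1 < p), a j - 1 ≤ a ⟨j + 1, hj⟩) :
    StrictMono fun j : Fin p => a j + 2 * (j : ℤ) := by
  cases p with
  | zero => exact fun j => j.elim0
  | succ q =>
    refine Fin.strictMono_iff_lt_succ.2 fun j => ?_
    have : a j.castSucc - 1 ≤ a j.succ := ha j.castSucc (by simp)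
    simp only [Fin.val_castSucc, Fin.val_succ]
    omega

lemma exists_strictMono_coe_eq_add_two_mul (hp : 1 ≤ p) (ha₁ : ∀ j, 1 ≤ a j)
    (ha₂ : ∀ (j : Fin p) (hj : (j : ℕ) + 1 < p), a j - 1 ≤ a ⟨j + 1, hj⟩)
    (ha₃ : a ⟨p - 1, Nat.sub_one_lt_of_lt hp⟩ ≤ (n : ℤ) - 2 * (p : ℤ) + 1) :
    ∃ t : Fin p → Fin n, StrictMono t ∧ ∀ j, (t j : ℤ) = a j + 2 * j := by
  have hmono := strictMono_add_two_mul ha₂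
  have hlt : ∀ j, a j + 2 * j < n := fun j => by
    have := hmono.monotone (show j ≤ ⟨p - 1, by omega⟩ from Fin.mk_le_mk.2 (by omega))
    simp only [Nat.cast_sub hp] at this
    omega
  refine ⟨fun j => ⟨(a j + 2 * j).toNat, by have := hlt j; have := ha₁ j; omega⟩,
    fun j k hjk => ?_, fun j => Int.toNat_of_nonneg (by have := ha₁ j; omega)⟩
  have := hmono hjk
  have := ha₁ j
  simp only [Fin.mk_lt_mk] at *
  omega

end RestrictedSeq

/-- The descent-height map is a bijection from ballot sequences of length `n` with
`p` down-steps onto restricted sequences `(a₁,…,a_p)`: `a_j ≥ 1`, `a_{j+1} ≥ a_j − 1`,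
and `a_p ≤ n − 2p + 1`. -/
theorem descHeights_bijOn (n p : ℕ) (hp : 1 ≤ p) :
    Set.BijOn (fun (ε : Fin n → ℤ) (j : Fin p) => (descHeights n ε).getD (j : ℕ) 0)
      {ε : Fin n → ℤ | IsBallot n p ε}
      {a : Fin p → ℤ | (∀ j, 1 ≤ a j) ∧
        (∀ (j : Fin p) (hj : (j : ℕ) + 1 < p), a j - 1 ≤ a ⟨(j : ℕ) + 1, hj⟩) ∧
        a ⟨p - 1, by omega⟩ ≤ (n : ℤ) - 2 * (p : ℤ) + 1} := by
  refine ⟨?mapsTo, ?injOn, ?surjOn⟩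
  · rintro ε hε
    obtain ⟨t, ht, rfl⟩ := exists_strictMono_seqWithDownSteps_eq hε.1 hε.2.1
    have hpos := (isBallot_seqWithDownSteps_iff ht).1 hε
    simp only [Set.mem_ofPred_eq, getD_descHeights_seqWithDownSteps ht]
    refine ⟨fun j => by have := hpos j; omega, fun j hj => ?_, ?_⟩
    · have : t j < t ⟨j + 1, hj⟩ := ht (Fin.mk_lt_mk.2 (by omega))
      push_cast
      omega
    · have := (t ⟨p - 1, by omega⟩).isLt
      push_cast [Nat.cast_sub hp]
      omega
  · rintro ε₁ hε₁ ε₂ hε₂ heq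
    obtain ⟨t₁, ht₁, rfl⟩ := exists_strictMono_seqWithDownSteps_eq hε₁.1 hε₁.2.1
    obtain ⟨t₂, ht₂, rfl⟩ := exists_strictMono_seqWithDownSteps_eq hε₂.1 hε₂.2.1
    congr
    funext j
    have := congrFun heq j
    simp only [getD_descHeights_seqWithDownSteps ht₁, getD_descHeights_seqWithDownSteps ht₂]
      at this
    omega
  · rintro a ⟨ha₁, ha₂, ha₃⟩
    obtain ⟨t, ht, hta⟩ := exists_strictMono_coe_eq_add_two_mul hp ha₁ ha₂ ha₃
    refine ⟨seqWithDownSteps t, (isBallot_seqWithDownSteps_iff ht).2 fun j => ?_,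
      funext fun j => ?_⟩
    · have := hta j
      have := ha₁ j
      omega
    · simp only [getD_descHeights_seqWithDownSteps ht, hta]
      ring
end

section
/- Let q ∈ ℂ and let 𝔞 be a noncrossing half-diagram on n points with p arcs having a minimum at position i (i.e. ε(𝔞)_i = −1 and ε(𝔞)_{i+1} = +1). Then E_i ξ_𝔞 = ξ_{◇_i(𝔞)}, where ◇_i(𝔞) is the noncrossing half-diagram whose encoding is obtained from ε(𝔞) by replacing the entries (−1,+1) at positions (i,i+1) by (+1,−1). -/
open scoped BigOperators

noncomputable section

attribute [local instance] Classical.propDecidable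

/-- `x` is matched (covered by an arc) in the arc set `A`. -/
def covered {n : ℕ} (A : Finset (Finset (Fin n))) (x : Fin n) : Prop :=
  ∃ c ∈ A, x ∈ c

/-- The arc set obtained from `A` by the Temperley–Lieb action at the pair `(x, y)`:
insert the arc `{x, y}`, keep all arcs disjoint from `{x, y}`, and if both `x` and `y`
were matched (to `j` and `k` say), add the arc `{j, k}`; a single former partner
becomes a through-string. -/
def newArcs {n : ℕ} (x y : Fin n) (A : Finset (Finset (Fin n))) :
    Finset (Finset (Fin n)) :=
  let P := ((A.filter fun c => x ∈ c ∨ y ∈ c).biUnion id) \ {x, y}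
  insert {x, y} ((A.filter fun c => x ∉ c ∧ y ∉ c) ∪ (if P.card = 2 then {P} else ∅))

/-- The complex vector space with basis the noncrossing half-diagrams on `n` points. -/
abbrev V (n : ℕ) := HalfDiag n →₀ ℂ

/-- The basis vector of `V n` indexed by the half-diagram `a`. -/
def xi {n : ℕ} (a : HalfDiag n) : V n := Finsupp.single a 1

/-- The action of the Temperley–Lieb generator `E_i` (`1 ≤ i ≤ n−1`, acting on the
points `i`, `i+1`, i.e. the `Fin n` values `i−1`, `i`) on a basis vector. -/
def Eact (q : ℂ) {n : ℕ} (i : ℕ) (a : HalfDiag n) : V n :=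
  if h : 1 ≤ i ∧ i < n then
    let x : Fin n := ⟨i - 1, by omega⟩
    let y : Fin n := ⟨i, h.2⟩
    if ({x, y} : Finset (Fin n)) ∈ a.arcs then q • xi a
    else if ¬ covered a.arcs x ∧ ¬ covered a.arcs y then 0
    else if hb : ∃ b : HalfDiag n, b.arcs = newArcs x y a.arcs then xi hb.choose
    else 0
  else 0

/-- The linear map `E_i` on `V n`. -/
def Eop (q : ℂ) (n : ℕ) (i : ℕ) : V n →ₗ[ℂ] V n :=
  Finsupp.lsum ℂ fun a => LinearMap.toSpanSingleton ℂ (V n) (Eact q i a)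

/-- The encoding of a half-diagram: `-1` at the larger point of each arc,
`+1` elsewhere (through-strings and smaller points of arcs). -/
def encode {n : ℕ} (a : HalfDiag n) : Fin n → ℤ := fun i =>
  if ∃ c ∈ a.arcs, i ∈ c ∧ ∃ j ∈ c, j < i then -1 else 1

/-- The height `h_i(a) = i − 2·(number of arcs of `a` contained in the first `i`
points)`. -/
def ht {n : ℕ} (a : HalfDiag n) (i : ℕ) : ℤ :=
  (i : ℤ) - 2 * ((a.arcs.filter fun c => ∀ x : Fin n, x ∈ c → (x : ℕ) < i).card : ℤ)

/-- `b` is obtained from `a` by box addition at `i`: `a` has a minimum at `i`,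
`h_i(b) = h_i(a) + 2`, and all other heights agree. -/
def IsBoxAdd {n : ℕ} (a b : HalfDiag n) (i : ℕ) : Prop :=
  1 ≤ i ∧ i + 1 ≤ n ∧ ht a i < ht a (i - 1) ∧ ht a i < ht a (i + 1) ∧
  ht b i = ht a i + 2 ∧ ∀ j ≤ n, j ≠ i → ht b j = ht a j

/-- `m` is the minimal half-diagram with `p` arcs: its arcs are
`{1,2}, {3,4}, …, {2p−1, 2p}` (zero-based: `{2j, 2j+1}` for `j < p`). -/
def IsMinDiag {n : ℕ} (p : ℕ) (m : HalfDiag n) : Prop :=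
  m.arcs.card = p ∧ ∀ c ∈ m.arcs, ∃ x y : Fin n, c = {x, y} ∧
    (y : ℕ) = (x : ℕ) + 1 ∧ (x : ℕ) % 2 = 0 ∧ (x : ℕ) < 2 * p

/-- `Δ k q` is the value at `q/2` of the degree-`k` Chebyshev polynomial of the
second kind. -/
def Delta (k : ℤ) (q : ℝ) : ℝ :=
  (Polynomial.Chebyshev.U ℝ k).eval (q / 2)

/-- `μ k q = Δ_{k-1}(q) / Δ_k(q)`. -/
def mu (k : ℤ) (q : ℝ) : ℝ :=
  Delta (k - 1) q / Delta k q

/-- The vector obtained from `ξ_{d 0}` by applying the white box addition operators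
`E_{i_k} − μ_{h_{i_k}(d (k−1)) + 1}` along the chain `d` with box-addition
positions `idx`. -/
def chainVec (q : ℝ) {n : ℕ} (d : ℕ → HalfDiag n) (idx : ℕ → ℕ) : ℕ → V n
  | 0 => xi (d 0)
  | k + 1 =>
      Eop (q : ℂ) n (idx (k + 1)) (chainVec q d idx k)
        - ((mu (ht (d k) (idx (k + 1)) + 1) q : ℝ) : ℂ) • chainVec q d idx k

/-- `d, idx` is a chain of `r` box additions from the minimal half-diagram with `p`
arcs to `a`. -/
def IsChainTo {n : ℕ} (p r : ℕ) (d : ℕ → HalfDiag n) (idx : ℕ → ℕ)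
    (a : HalfDiag n) : Prop :=
  IsMinDiag p (d 0) ∧ d r = a ∧ ∀ k < r, IsBoxAdd (d k) (d (k + 1)) (idx (k + 1))

/-- Adjacency in the multigraph union of the arcs of `a` and the arcs of `b`. -/
def unionAdj {n : ℕ} (a b : HalfDiag n) (x y : Fin n) : Prop :=
  x ≠ y ∧ (({x, y} : Finset (Fin n)) ∈ a.arcs ∨ ({x, y} : Finset (Fin n)) ∈ b.arcs)

/-- The connected component of `v` in the union multigraph of `a` and `b`. -/
def comp {n : ℕ} (a b : HalfDiag n) (v : Fin n) : Set (Fin n) :=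
  {w | Relation.ReflTransGen (unionAdj a b) v w}

/-- Every path component of the union multigraph joins a through-string of `a` to a
through-string of `b`: equivalently, each component contains at most one point
unmatched in `a` and at most one point unmatched in `b`. -/
def goodPair {n : ℕ} (a b : HalfDiag n) : Prop :=
  (∀ v w₁ w₂ : Fin n, w₁ ∈ comp a b v → w₂ ∈ comp a b v →
      ¬ covered a.arcs w₁ → ¬ covered a.arcs w₂ → w₁ = w₂) ∧
  (∀ v w₁ w₂ : Fin n, w₁ ∈ comp a b v → w₂ ∈ comp a b v →
      ¬ covered b.arcs w₁ → ¬ covered b.arcs w₂ → w₁ = w₂)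

/-- The set of cycle components of the union multigraph: components all of whose
points are matched in both `a` and `b`. -/
def cycleComps {n : ℕ} (a b : HalfDiag n) : Set (Set (Fin n)) :=
  {C | ∃ v : Fin n, C = comp a b v ∧ ∀ w ∈ C, covered a.arcs w ∧ covered b.arcs w}

/-- The inner product of two basis diagrams: `q^c` with `c` the number of closed
loops if every path joins a through-string of `a` to a through-string of `b`, and
`0` otherwise. -/
def inner0 (q : ℝ) {n : ℕ} (a b : HalfDiag n) : ℂ :=
  if goodPair a b then (q : ℂ) ^ (cycleComps a b).ncard else 0

/-- The sesquilinear form on `V n` (conjugate-linear in the second argument)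
extending `inner0`. -/
def form (q : ℝ) {n : ℕ} (v w : V n) : ℂ :=
  ∑ a ∈ v.support, ∑ b ∈ w.support, v a * (starRingEnd ℂ) (w b) * inner0 q a b

end

/-!
At a minimum, `x = i - 1` is the right end of an arc `{j, x}`, and `y = i` is either a
through-string or the left end of an arc `{y, k}`. `E_i` replaces these arcs by `{x, y}`
(and `{j, k}`), and leaves all other arcs alone. The new arc set is again noncrossing,
which is checked in the nested form `IsNested`: an arc disjoint from `{x, y}` that has
`x` or `y` under it has all of `j, x, y, k` under it, and a point under `{j, k}` other than
`x, y` lies under `{j, x}` or `{y, k}`. The right ends of the new arcs are those of the old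
ones with `x` replaced by `y` (`k` closes `{j, k}` as it closed `{y, k}`), which is the
claimed change of the encoding.
-/

theorem eq_and_eq_of_mem_pair_of_lt_s11 {α : Type*} [LinearOrder α] [DecidableEq α] {u v s t : α}
    (huv : u < v) (hs : s ∈ ({u, v} : Finset α)) (ht : t ∈ ({u, v} : Finset α)) (hst : s < t) :
    s = u ∧ t = v := by
  simp only [Finset.mem_insert, Finset.mem_singleton] at hs ht
  rcases hs with rfl | rfl <;> rcases ht with rfl | rfl <;> simp_all [lt_asymm huv]

theorem pairwiseDisjoint_insert_pair {α : Type*} [DecidableEq α] {S : Finset (Finset α)}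
    {u v : α} (hS : (S : Set (Finset α)).PairwiseDisjoint id) (h : ∀ e ∈ S, u ∉ e ∧ v ∉ e) :
    ((insert {u, v} S : Finset (Finset α)) : Set (Finset α)).PairwiseDisjoint id := by
  rw [Finset.coe_insert]
  exact hS.insert fun e he _ => by simp [Finset.disjoint_insert_left, h e he]

section

-- The same instances as in `newArcs` and `encode`, so that the arc sets below match them.
attribute [local instance] Classical.propDecidable

variable {n : ℕ}

theorem not_lt_and_lt_of_mem_pair_of_succ {x y u v t : Fin n} (hxy : (y : ℕ) = x + 1)
    (hu : u ∈ ({x, y} : Finset (Fin n))) (hv : v ∈ ({x, y} : Finset (Fin n))) :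
    ¬ (u < t ∧ t < v) := by
  rintro ⟨hut, htv⟩
  obtain ⟨rfl, rfl⟩ := eq_and_eq_of_mem_pair_of_lt_s11 (show x < y by omega) hu hv (hut.trans htv)
  omega

/-- Given disjointness of the arcs, this is equivalent to the noncrossing conditions `nc1`
and `nc2` together. -/
def IsNested (A : Finset (Finset (Fin n))) : Prop :=
  ∀ c ∈ A, ∀ u ∈ c, ∀ v ∈ c, ∀ t, u < t → t < v → ∃ d ∈ A, t ∈ d ∧ ∀ s ∈ d, u < s ∧ s < v

def IsRightEnd (A : Finset (Finset (Fin n))) (z : Fin n) : Prop :=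
  ∃ c ∈ A, z ∈ c ∧ ∃ w ∈ c, w < z

theorem isRightEnd_insert_pair {A : Finset (Finset (Fin n))} {u v z : Fin n} (huv : u < v) :
    IsRightEnd (insert {u, v} A) z ↔ z = v ∨ IsRightEnd A z := by
  rw [IsRightEnd, Finset.exists_mem_insert]
  refine or_congr ⟨?_, ?_⟩ Iff.rfl
  · rintro ⟨hz, w, hw, hwz⟩
    exact (eq_and_eq_of_mem_pair_of_lt_s11 huv hw hz hwz).2
  · rintro rfl
    exact ⟨by simp, u, by simp, huv⟩

-- `encode` decides its condition with other instances, hence `if_congr` rather than `rfl`.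
theorem encode_def (a : HalfDiag n) (z : Fin n) :
    encode a z = if IsRightEnd a.arcs z then -1 else 1 :=
  if_congr Iff.rfl rfl rfl

theorem encode_eq_neg_one_iff {a : HalfDiag n} {z : Fin n} :
    encode a z = -1 ↔ IsRightEnd a.arcs z := by
  rw [encode_def]
  split_ifs with h <;> simp [h]

theorem encode_eq_one_iff {a : HalfDiag n} {z : Fin n} :
    encode a z = 1 ↔ ¬ IsRightEnd a.arcs z := by
  rw [encode_def]
  split_ifs with h <;> simp [h]

theorem encode_eq_update_of_isRightEnd_iff {a b : HalfDiag n} {x y : Fin n} (hxy : x ≠ y)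
    (h : ∀ z, IsRightEnd b.arcs z ↔ z = y ∨ (IsRightEnd a.arcs z ∧ z ≠ x)) :
    encode b = Function.update (Function.update (encode a) x 1) y (-1) := by
  funext z
  rcases eq_or_ne z y with rfl | hzy
  · simp [encode_eq_neg_one_iff, h]
  rw [Function.update_of_ne hzy]
  rcases eq_or_ne z x with rfl | hzx
  · simp [encode_eq_one_iff, h, hzy]
  · simp [encode_def, h, hzy, hzx]

namespace HalfDiag

variable (a : HalfDiag n)

theorem arcs_injective_s11 : Function.Injective (arcs : HalfDiag n → Finset (Finset (Fin n))) := by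
  rintro ⟨⟩ ⟨⟩ h
  cases h
  rfl

theorem pairwiseDisjoint : (a.arcs : Set (Finset (Fin n))).PairwiseDisjoint id :=
  fun c hc d hd hcd => a.disj c hc d hd hcd

theorem eq_of_mem_of_mem {c d : Finset (Fin n)} (hc : c ∈ a.arcs) (hd : d ∈ a.arcs) {z : Fin n}
    (hzc : z ∈ c) (hzd : z ∈ d) : c = d :=
  by_contra fun h => Finset.disjoint_left.mp (a.disj c hc d hd h) hzc hzd

theorem eq_pair_of_mem {c : Finset (Fin n)} (hc : c ∈ a.arcs) {u v : Fin n} (hu : u ∈ c)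
    (hv : v ∈ c) (huv : u ≠ v) : c = {u, v} :=
  (Finset.eq_of_subset_of_card_le (Finset.insert_subset hu (Finset.singleton_subset_iff.2 hv))
    (by rw [a.two c hc, Finset.card_pair huv])).symm

theorem exists_mem_of_lt_of_lt {c : Finset (Fin n)} (hc : c ∈ a.arcs) {u v t : Fin n}
    (hu : u ∈ c) (hv : v ∈ c) (hut : u < t) (htv : t < v) : ∃ d ∈ a.arcs, t ∈ d := by
  by_contra! h
  exact a.nc2 c hc u v hu hv t h hut htv

theorem lt_and_lt_of_mem {c d : Finset (Fin n)} (hc : c ∈ a.arcs) (hd : d ∈ a.arcs)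
    {u v t s : Fin n} (hu : u ∈ c) (hv : v ∈ c) (ht : t ∈ d) (hut : u < t) (htv : t < v)
    (hs : s ∈ d) : u < s ∧ s < v := by
  have htc : t ∉ c := by
    rw [a.eq_pair_of_mem hc hu hv (hut.trans htv).ne]
    simp [hut.ne', htv.ne]
  have hsc : s ∉ c := fun hsc => htc (a.eq_of_mem_of_mem hd hc hs hsc ▸ ht)
  have hsu : ¬ s < u := fun hsu => a.nc1 d hd c hc s t u v hs ht hu hv hsu hut htv
  have hvs : ¬ v < s := fun hvs => a.nc1 c hc d hd u v t s hu hv ht hs hut htv hvs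
  have := ne_of_mem_of_not_mem hu hsc
  have := ne_of_mem_of_not_mem hv hsc
  omega

theorem isNested : IsNested a.arcs := by
  intro c hc u hu v hv t hut htv
  obtain ⟨d, hd, htd⟩ := a.exists_mem_of_lt_of_lt hc hu hv hut htv
  exact ⟨d, hd, htd, fun _ hs => a.lt_and_lt_of_mem hc hd hu hv htd hut htv hs⟩

theorem exists_arcs_eq_of_isNested {A : Finset (Finset (Fin n))} (two : ∀ c ∈ A, c.card = 2)
    (disj : (A : Set (Finset (Fin n))).PairwiseDisjoint id) (hA : IsNested A) :
    ∃ b : HalfDiag n, b.arcs = A := by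
  refine ⟨⟨A, two, fun c hc d hd hcd => disj hc hd hcd, ?_, ?_⟩, rfl⟩
  · intro c hc d hd i j k l hi hj hk hl hik hkj hjl
    obtain ⟨e, he, hke, hin⟩ := hA c hc i hi j hj k hik hkj
    have hed : e = d := by_contra fun h => Finset.disjoint_left.mp (disj he hd h) hke hk
    exact (hin l (hed ▸ hl)).2.not_gt hjl
  · intro c hc i j hi hj t ht hit htj
    obtain ⟨d, hd, htd, -⟩ := hA c hc i hi j hj t hit htj
    exact ht d hd htd

theorem eq_of_isRightEnd_of_mem_pair {u v z : Fin n} (huv : u < v) (hA : {u, v} ∈ a.arcs)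
    (hz : IsRightEnd a.arcs z) (hzuv : z ∈ ({u, v} : Finset (Fin n))) : z = v := by
  obtain ⟨c, hc, hzc, w, hwc, hwz⟩ := hz
  obtain rfl := a.eq_of_mem_of_mem hc hA hzc hzuv
  exact (eq_and_eq_of_mem_pair_of_lt_s11 huv hwc hzc hwz).2

theorem isRightEnd_filter_iff {x y z : Fin n} :
    IsRightEnd (a.arcs.filter fun c => x ∉ c ∧ y ∉ c) z ↔
      IsRightEnd a.arcs z ∧ ∀ c ∈ a.arcs, z ∈ c → x ∉ c ∧ y ∉ c := by
  simp only [IsRightEnd, Finset.mem_filter]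
  constructor
  · rintro ⟨c, ⟨hc, hxyc⟩, hzc, hw⟩
    exact ⟨⟨c, hc, hzc, hw⟩, fun d hd hzd => a.eq_of_mem_of_mem hc hd hzc hzd ▸ hxyc⟩
  · rintro ⟨⟨c, hc, hzc, hw⟩, h⟩
    exact ⟨c, ⟨hc, h c hc hzc⟩, hzc, hw⟩

theorem exists_pair_mem_of_isRightEnd {x : Fin n} (hx : IsRightEnd a.arcs x) :
    ∃ j < x, {j, x} ∈ a.arcs := by
  obtain ⟨c, hc, hxc, j, hjc, hjx⟩ := hx
  exact ⟨j, hjx, a.eq_pair_of_mem hc hjc hxc hjx.ne ▸ hc⟩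

theorem exists_pair_mem_of_not_isRightEnd {y : Fin n} (hy : ¬ IsRightEnd a.arcs y)
    {c : Finset (Fin n)} (hc : c ∈ a.arcs) (hyc : y ∈ c) : ∃ k, y < k ∧ {y, k} ∈ a.arcs := by
  obtain ⟨k, hkc, hky⟩ := c.exists_mem_ne (by rw [a.two c hc]; norm_num) y
  have hyk : y < k := lt_of_le_of_ne (not_lt.1 fun h => hy ⟨c, hc, hyc, k, hkc, h⟩) hky.symm
  exact ⟨k, hyk, a.eq_pair_of_mem hc hyc hkc hyk.ne ▸ hc⟩

variable {j x y k : Fin n}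

theorem filter_mem_or_mem_eq_singleton (hjxA : {j, x} ∈ a.arcs) (hy : ¬ covered a.arcs y) :
    a.arcs.filter (fun c => x ∈ c ∨ y ∈ c) = {{j, x}} := by
  ext c
  simp only [Finset.mem_filter, Finset.mem_singleton]
  constructor
  · rintro ⟨hc, hxc | hyc⟩
    · exact a.eq_of_mem_of_mem hc hjxA hxc (by simp)
    · exact (hy ⟨c, hc, hyc⟩).elim
  · rintro rfl
    simp [hjxA]

theorem newArcs_eq_of_pair_mem_of_not_covered (hjx : j < x) (hxy : x < y)
    (hjxA : {j, x} ∈ a.arcs) (hy : ¬ covered a.arcs y) :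
    newArcs x y a.arcs = insert {x, y} (a.arcs.filter fun c => x ∉ c ∧ y ∉ c) := by
  have hj : ({j, x} : Finset (Fin n)) \ {x, y} = {j} := by
    ext z; simp only [Finset.mem_sdiff, Finset.mem_insert, Finset.mem_singleton]; omega
  simp only [newArcs, a.filter_mem_or_mem_eq_singleton hjxA hy, Finset.singleton_biUnion, id, hj,
    Finset.card_singleton, OfNat.one_ne_ofNat, if_false, Finset.union_empty]

theorem isNested_insert_pair_filter (hxy : (y : ℕ) = x + 1) (hy : ¬ covered a.arcs y) :
    IsNested (insert {x, y} (a.arcs.filter fun c => x ∉ c ∧ y ∉ c)) := by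
  intro c hc u hu v hv t hut htv
  rw [Finset.mem_insert, Finset.mem_filter] at hc
  rcases hc with rfl | ⟨hcA, -, hyc⟩
  · exact (not_lt_and_lt_of_mem_pair_of_succ hxy hu hv ⟨hut, htv⟩).elim
  obtain ⟨d, hd, htd, hin⟩ := a.isNested c hcA u hu v hv t hut htv
  have hyd : y ∉ d := fun h => hy ⟨d, hd, h⟩
  have hxd : x ∉ d := by
    intro hxd
    have := hin x hxd
    have := ne_of_mem_of_not_mem hv hyc
    exact hy (a.exists_mem_of_lt_of_lt hcA hu hv (by omega) (by omega))
  exact ⟨d, Finset.mem_insert_of_mem (Finset.mem_filter.2 ⟨hd, hxd, hyd⟩), htd, hin⟩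

theorem exists_arcs_eq_insert_pair_filter (hxy : (y : ℕ) = x + 1) (hy : ¬ covered a.arcs y) :
    ∃ b : HalfDiag n, b.arcs = insert {x, y} (a.arcs.filter fun c => x ∉ c ∧ y ∉ c) := by
  refine exists_arcs_eq_of_isNested ?_ ?_ (a.isNested_insert_pair_filter hxy hy)
  · rw [Finset.forall_mem_insert]
    exact ⟨Finset.card_pair (by omega), fun c hc => a.two c (Finset.mem_filter.1 hc).1⟩
  · exact pairwiseDisjoint_insert_pair
      (a.pairwiseDisjoint.subset (Finset.coe_subset.2 (Finset.filter_subset _ _)))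
      fun e he => (Finset.mem_filter.1 he).2

theorem isRightEnd_insert_pair_filter_iff (hjx : j < x) (hxy : x < y) (hjxA : {j, x} ∈ a.arcs)
    (hy : ¬ covered a.arcs y) {z : Fin n} :
    IsRightEnd (insert {x, y} (a.arcs.filter fun c => x ∉ c ∧ y ∉ c)) z ↔
      z = y ∨ (IsRightEnd a.arcs z ∧ z ≠ x) := by
  rw [isRightEnd_insert_pair hxy, a.isRightEnd_filter_iff]
  refine or_congr_right ⟨?_, ?_⟩
  · rintro ⟨hz, h⟩
    exact ⟨hz, fun hzx => (h _ hjxA (by simp [hzx])).1 (by simp)⟩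
  · rintro ⟨hz, hzx⟩
    refine ⟨hz, fun c hc hzc => ⟨fun hxc => ?_, fun hyc => hy ⟨c, hc, hyc⟩⟩⟩
    rw [a.eq_of_mem_of_mem hc hjxA hxc (by simp)] at hzc
    exact hzx (a.eq_of_isRightEnd_of_mem_pair hjx hjxA hz hzc)

theorem filter_mem_or_mem_eq_pair (hjxA : {j, x} ∈ a.arcs) (hykA : {y, k} ∈ a.arcs) :
    a.arcs.filter (fun c => x ∈ c ∨ y ∈ c) = {{j, x}, {y, k}} := by
  ext c
  simp only [Finset.mem_filter, Finset.mem_insert, Finset.mem_singleton]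
  constructor
  · rintro ⟨hc, hxc | hyc⟩
    · exact Or.inl (a.eq_of_mem_of_mem hc hjxA hxc (by simp))
    · exact Or.inr (a.eq_of_mem_of_mem hc hykA hyc (by simp))
  · rintro (rfl | rfl)
    · simp [hjxA]
    · simp [hykA]

theorem newArcs_eq_of_pair_mem_of_pair_mem (hjx : j < x) (hxy : x < y) (hyk : y < k)
    (hjxA : {j, x} ∈ a.arcs) (hykA : {y, k} ∈ a.arcs) :
    newArcs x y a.arcs =
      insert {x, y} (insert {j, k} (a.arcs.filter fun c => x ∉ c ∧ y ∉ c)) := by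
  have hjk : ({j, x} ∪ {y, k} : Finset (Fin n)) \ {x, y} = {j, k} := by
    ext z
    simp only [Finset.mem_sdiff, Finset.mem_union, Finset.mem_insert, Finset.mem_singleton]
    omega
  simp only [newArcs, a.filter_mem_or_mem_eq_pair hjxA hykA, Finset.biUnion_insert,
    Finset.singleton_biUnion, id, hjk, Finset.card_pair (hjx.trans (hxy.trans hyk)).ne,
    if_true, Finset.union_singleton]

theorem lt_and_lt_of_lt_of_lt_of_succ (hxy : (y : ℕ) = x + 1) (hjxA : {j, x} ∈ a.arcs)
    (hykA : {y, k} ∈ a.arcs) {c : Finset (Fin n)} (hc : c ∈ a.arcs) {u v : Fin n}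
    (hu : u ∈ c) (hv : v ∈ c) (hxc : x ∉ c) (hyc : y ∉ c) (huy : u < y) (hxv : x < v) :
    u < j ∧ k < v := by
  have := ne_of_mem_of_not_mem hu hxc
  have := ne_of_mem_of_not_mem hv hyc
  exact ⟨(a.lt_and_lt_of_mem hc hjxA hu hv (t := x) (by simp) (by omega) hxv (by simp)).1,
    (a.lt_and_lt_of_mem hc hykA hu hv (t := y) (by simp) huy (by omega) (by simp)).2⟩

theorem isNested_insert_pair_insert_pair (hjx : j < x) (hxy : (y : ℕ) = x + 1) (hyk : y < k)
    (hjxA : {j, x} ∈ a.arcs) (hykA : {y, k} ∈ a.arcs) :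
    IsNested (insert {x, y} (insert {j, k} (a.arcs.filter fun c => x ∉ c ∧ y ∉ c))) := by
  have retained : ∀ d ∈ a.arcs, x ∉ d → y ∉ d →
      d ∈ insert {x, y} (insert {j, k} (a.arcs.filter fun c => x ∉ c ∧ y ∉ c)) := by
    intro d hd hxd hyd
    simp [hd, hxd, hyd]
  intro c hc u hu v hv t hut htv
  simp only [Finset.mem_insert, Finset.mem_filter] at hc
  rcases hc with rfl | rfl | ⟨hcA, hxc, hyc⟩
  · exact (not_lt_and_lt_of_mem_pair_of_succ hxy hu hv ⟨hut, htv⟩).elim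
  · obtain ⟨rfl, rfl⟩ := eq_and_eq_of_mem_pair_of_lt_s11 (by omega : j < k) hu hv (hut.trans htv)
    rcases lt_or_ge t x with htx | hxt
    · obtain ⟨d, hd, htd, hin⟩ := a.isNested _ hjxA u (by simp) x (by simp) t hut htx
      refine ⟨d, retained d hd (fun h => ?_) (fun h => ?_), htd, fun s hs => ?_⟩ <;>
        [have := hin x h; have := hin y h; have := hin s hs] <;> omega
    rcases le_or_gt t y with hty | hyt
    · exact ⟨{x, y}, by simp, by simp; omega, by simp; omega⟩
    · obtain ⟨d, hd, htd, hin⟩ := a.isNested _ hykA y (by simp) v (by simp) t hyt htv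
      refine ⟨d, retained d hd (fun h => ?_) (fun h => ?_), htd, fun s hs => ?_⟩ <;>
        [have := hin x h; have := hin y h; have := hin s hs] <;> omega
  · obtain ⟨d, hd, htd, hin⟩ := a.isNested c hcA u hu v hv t hut htv
    by_cases hxyd : x ∈ d ∨ y ∈ d
    · have hxy_under : u < y ∧ x < v := by
        rcases hxyd with h | h <;> have := hin _ h <;> omega
      have hjk := a.lt_and_lt_of_lt_of_lt_of_succ hxy hjxA hykA hcA hu hv hxc hyc
        hxy_under.1 hxy_under.2
      have ht : t = j ∨ t = x ∨ t = y ∨ t = k := by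
        rcases hxyd with h | h
        · rw [a.eq_of_mem_of_mem hd hjxA h (by simp)] at htd
          simp only [Finset.mem_insert, Finset.mem_singleton] at htd
          tauto
        · rw [a.eq_of_mem_of_mem hd hykA h (by simp)] at htd
          simp only [Finset.mem_insert, Finset.mem_singleton] at htd
          tauto
      by_cases htxy : t = x ∨ t = y
      · exact ⟨{x, y}, by simp, by simpa using htxy, by simp; omega⟩
      · exact ⟨{j, k}, by simp, by simp; tauto, by simp; omega⟩
    · push Not at hxyd
      exact ⟨d, retained d hd hxyd.1 hxyd.2, htd, hin⟩

theorem exists_arcs_eq_insert_pair_insert_pair (hjx : j < x) (hxy : (y : ℕ) = x + 1)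
    (hyk : y < k) (hjxA : {j, x} ∈ a.arcs) (hykA : {y, k} ∈ a.arcs) :
    ∃ b : HalfDiag n,
      b.arcs = insert {x, y} (insert {j, k} (a.arcs.filter fun c => x ∉ c ∧ y ∉ c)) := by
  refine exists_arcs_eq_of_isNested ?_ ?_
    (a.isNested_insert_pair_insert_pair hjx hxy hyk hjxA hykA)
  · simp only [Finset.forall_mem_insert]
    exact ⟨Finset.card_pair (by omega), Finset.card_pair (by omega),
      fun c hc => a.two c (Finset.mem_filter.1 hc).1⟩
  have hjk : ∀ e ∈ a.arcs.filter (fun c => x ∉ c ∧ y ∉ c), j ∉ e ∧ k ∉ e := by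
    intro e he
    rw [Finset.mem_filter] at he
    exact ⟨fun h => he.2.1 (a.eq_of_mem_of_mem he.1 hjxA h (by simp) ▸ by simp),
      fun h => he.2.2 (a.eq_of_mem_of_mem he.1 hykA h (by simp) ▸ by simp)⟩
  refine pairwiseDisjoint_insert_pair (pairwiseDisjoint_insert_pair
    (a.pairwiseDisjoint.subset (Finset.coe_subset.2 (Finset.filter_subset _ _))) hjk) ?_
  rw [Finset.forall_mem_insert]
  exact ⟨by simp; omega, fun e he => (Finset.mem_filter.1 he).2⟩

theorem isRightEnd_insert_pair_insert_pair_iff (hjx : j < x) (hxy : x < y) (hyk : y < k)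
    (hjxA : {j, x} ∈ a.arcs) (hykA : {y, k} ∈ a.arcs) {z : Fin n} :
    IsRightEnd (insert {x, y} (insert {j, k} (a.arcs.filter fun c => x ∉ c ∧ y ∉ c))) z ↔
      z = y ∨ (IsRightEnd a.arcs z ∧ z ≠ x) := by
  rw [isRightEnd_insert_pair hxy, isRightEnd_insert_pair (hjx.trans (hxy.trans hyk)),
    a.isRightEnd_filter_iff]
  refine or_congr_right ⟨?_, ?_⟩
  · rintro (rfl | ⟨hz, h⟩)
    · exact ⟨⟨_, hykA, by simp, y, by simp, hyk⟩, (hxy.trans hyk).ne'⟩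
    · exact ⟨hz, fun hzx => (h _ hjxA (by simp [hzx])).1 (by simp)⟩
  · rintro ⟨hz, hzx⟩
    refine or_iff_not_imp_left.2 fun hzk => ⟨hz, fun c hc hzc => ⟨fun hxc => ?_, fun hyc => ?_⟩⟩
    · rw [a.eq_of_mem_of_mem hc hjxA hxc (by simp)] at hzc
      exact hzx (a.eq_of_isRightEnd_of_mem_pair hjx hjxA hz hzc)
    · rw [a.eq_of_mem_of_mem hc hykA hyc (by simp)] at hzc
      exact hzk (a.eq_of_isRightEnd_of_mem_pair hyk hykA hz hzc)

theorem exists_arcs_eq_newArcs_of_isRightEnd (hxy : (y : ℕ) = x + 1)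
    (hx : IsRightEnd a.arcs x) (hy : ¬ IsRightEnd a.arcs y) :
    ∃ b : HalfDiag n, b.arcs = newArcs x y a.arcs ∧
      ∀ z, IsRightEnd b.arcs z ↔ z = y ∨ (IsRightEnd a.arcs z ∧ z ≠ x) := by
  have hxy' : x < y := by omega
  obtain ⟨j, hjx, hjxA⟩ := a.exists_pair_mem_of_isRightEnd hx
  by_cases hcov : covered a.arcs y
  · obtain ⟨c, hc, hyc⟩ := hcov
    obtain ⟨k, hyk, hykA⟩ := a.exists_pair_mem_of_not_isRightEnd hy hc hyc
    obtain ⟨b, hb⟩ := a.exists_arcs_eq_insert_pair_insert_pair hjx hxy hyk hjxA hykA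
    refine ⟨b, hb.trans (a.newArcs_eq_of_pair_mem_of_pair_mem hjx hxy' hyk hjxA hykA).symm,
      fun z => ?_⟩
    rw [hb, a.isRightEnd_insert_pair_insert_pair_iff hjx hxy' hyk hjxA hykA]
  · obtain ⟨b, hb⟩ := a.exists_arcs_eq_insert_pair_filter hxy hcov
    refine ⟨b, hb.trans (a.newArcs_eq_of_pair_mem_of_not_covered hjx hxy' hjxA hcov).symm,
      fun z => ?_⟩
    rw [hb, a.isRightEnd_insert_pair_filter_iff hjx hxy' hjxA hcov]

end HalfDiag

theorem Eop_xi_eq_xi_of_arcs_eq_newArcs (q : ℂ) {i : ℕ} (h1 : 1 ≤ i) (h2 : i < n)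
    {a b : HalfDiag n}
    (hxy : ({⟨i - 1, (i.sub_le 1).trans_lt h2⟩, ⟨i, h2⟩} : Finset (Fin n)) ∉ a.arcs)
    (hx : covered a.arcs ⟨i - 1, (i.sub_le 1).trans_lt h2⟩)
    (hb : b.arcs = newArcs ⟨i - 1, (i.sub_le 1).trans_lt h2⟩ ⟨i, h2⟩ a.arcs) :
    Eop q n i (xi a) = xi b := by
  have hb' : ∃ b' : HalfDiag n,
      b'.arcs = newArcs ⟨i - 1, (i.sub_le 1).trans_lt h2⟩ ⟨i, h2⟩ a.arcs := ⟨b, hb⟩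
  rw [xi, Eop, Finsupp.lsum_single, LinearMap.toSpanSingleton_apply, one_smul, Eact,
    dif_pos ⟨h1, h2⟩]
  dsimp only
  rw [if_neg hxy, if_neg fun h => h.1 hx, dif_pos hb']
  exact congrArg xi (HalfDiag.arcs_injective_s11 (hb'.choose_spec.trans hb.symm))

end

/-- If the half-diagram `a` has a minimum at position `i` (its encoding has `-1` at
position `i` and `+1` at position `i+1`), then `E_i ξ_a = ξ_{◇_i(a)}`, where
`◇_i(a)` is the half-diagram whose encoding is that of `a` with these two entries
swapped. -/
theorem Eop_xi_of_min (q : ℂ) (n : ℕ) (a : HalfDiag n)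
    (i : ℕ) (h1 : 1 ≤ i) (h2 : i < n)
    (hdown : encode a ⟨i - 1, by omega⟩ = -1) (hup : encode a ⟨i, h2⟩ = 1) :
    ∃ b : HalfDiag n,
      encode b = Function.update (Function.update (encode a) ⟨i - 1, by omega⟩ 1)
          ⟨i, h2⟩ (-1) ∧
      Eop q n i (xi a) = xi b := by
  have hx : IsRightEnd a.arcs ⟨i - 1, by omega⟩ := encode_eq_neg_one_iff.1 hdown
  have hy : ¬ IsRightEnd a.arcs ⟨i, h2⟩ := encode_eq_one_iff.1 hup
  have hlt : i - 1 < i := by omega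
  obtain ⟨b, hb, hends⟩ := a.exists_arcs_eq_newArcs_of_isRightEnd (by simp; omega) hx hy
  refine ⟨b, encode_eq_update_of_isRightEnd_iff (Fin.ne_of_lt hlt) hends,
    Eop_xi_eq_xi_of_arcs_eq_newArcs q h1 h2
      (fun h => hy ⟨_, h, by simp, ⟨i - 1, by omega⟩, by simp, hlt⟩) ?_ hb⟩
  obtain ⟨c, hc, hxc, -⟩ := hx
  exact ⟨c, hc, hxc⟩
end

section
/- Let q be a real number with Δ_k(q) ≠ 0 for 1 ≤ k ≤ n. For every noncrossing half-diagram 𝔞 on n points with p arcs, ξ′_𝔞 − ξ_𝔞 lies in the span of {ξ_𝔟 : 𝔟 a half-diagram with p arcs, 𝔟 ≠ 𝔞, and h_i(𝔟) ≤ h_i(𝔞) for all i}; that is, ξ′_𝔞 equals ξ_𝔞 plus a linear combination of basis vectors indexed by half-diagrams strictly below 𝔞 in the height-domination order. -/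
open scoped BigOperators

noncomputable section

attribute [local instance] Classical.propDecidable

end

/-! The arcs of a half-diagram are exactly the excursions of its height path: `{u, v}` with
`u < v` is an arc iff the path returns at `v + 1` to its level at `u` and stays strictly above
it in between. In particular the heights determine the diagram.

If `a` has a minimum at `i`, then `E_i ξ_a = ξ_{◇_i a}`. For any other basis vector, `E_i ξ_e`
is `q ξ_e`, `0`, or `ξ_c`, where comparing the arcs of `c` and `e` to the left of each cut shows
that `c` lies below `e` except at `i`, where its height may exceed that of `e` by `2`. Hence if
`e` lies strictly below `a`, then `c` lies strictly below `◇_i a`, so `E_i - μ` maps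
`ξ_a + (lower terms)` to `ξ_{◇_i a} + (lower terms)`. Induction along the chain of box
additions finishes the proof. -/

noncomputable section

attribute [local instance] Classical.propDecidable

def IsExcursion (h : ℕ → ℤ) (u v : ℕ) : Prop :=
  h (v + 1) = h u ∧ ∀ m, u < m → m ≤ v → h u < h m

theorem IsExcursion.mono {h h' : ℕ → ℤ} {u v : ℕ} (hexc : IsExcursion h u v)
    (hu : h' u = h u) (hv : h' (v + 1) = h (v + 1))
    (hle : ∀ m, u < m → m ≤ v → h m ≤ h' m) :
    IsExcursion h' u v :=
  ⟨by rw [hu, hv, hexc.1], fun m hum hmv => hu ▸ (hexc.2 m hum hmv).trans_le (hle m hum hmv)⟩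

namespace HalfDiag

variable {n : ℕ}

theorem ext {a b : HalfDiag n} (h : a.arcs = b.arcs) : a = b := by
  cases a; cases b; simp_all

theorem exists_lt_of_mem_arcs (a : HalfDiag n) {c : Finset (Fin n)} (hc : c ∈ a.arcs) :
    ∃ u v : Fin n, u < v ∧ c = {u, v} := by
  obtain ⟨u, v, huv, rfl⟩ := Finset.card_eq_two.mp (a.two c hc)
  rcases huv.lt_or_gt with h | h
  · exact ⟨u, v, h, rfl⟩
  · exact ⟨v, u, h, Finset.pair_comm u v⟩

theorem arc_eq_of_mem (a : HalfDiag n) {c c' : Finset (Fin n)} (hc : c ∈ a.arcs)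
    (hc' : c' ∈ a.arcs) {x : Fin n} (hx : x ∈ c) (hx' : x ∈ c') : c = c' := by
  by_contra h
  exact Finset.disjoint_left.mp (a.disj c hc c' hc' h) hx hx'

theorem ne_of_pair_mem_arcs (a : HalfDiag n) {u v : Fin n}
    (h : ({u, v} : Finset (Fin n)) ∈ a.arcs) : u ≠ v := by
  rintro rfl
  simpa using a.two _ h

theorem partner_unique (a : HalfDiag n) {x j l : Fin n}
    (hj : ({x, j} : Finset (Fin n)) ∈ a.arcs) (hl : ({x, l} : Finset (Fin n)) ∈ a.arcs) :
    j = l := by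
  have h := a.arc_eq_of_mem hj hl (x := x) (by simp) (by simp)
  have hjl : j ∈ ({x, l} : Finset (Fin n)) := h ▸ by simp
  rcases Finset.mem_insert.mp hjl with rfl | hjl
  · exact absurd rfl (a.ne_of_pair_mem_arcs hj)
  · exact Finset.mem_singleton.mp hjl

theorem not_crossing (a : HalfDiag n) {u v s t : Fin n}
    (h₁ : ({u, v} : Finset (Fin n)) ∈ a.arcs) (h₂ : ({s, t} : Finset (Fin n)) ∈ a.arcs)
    (hus : u < s) (hsv : s < v) (hvt : v < t) : False :=
  a.nc1 _ h₁ _ h₂ u v s t (by simp) (by simp) (by simp) (by simp) hus hsv hvt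

theorem covered_of_lt_of_lt (a : HalfDiag n) {u v k : Fin n}
    (h : ({u, v} : Finset (Fin n)) ∈ a.arcs) (huk : u < k) (hkv : k < v) :
    covered a.arcs k := by
  by_contra hk
  exact a.nc2 _ h u v (by simp) (by simp) k (fun b hb hkb => hk ⟨b, hb, hkb⟩) huk hkv

theorem exists_partner (a : HalfDiag n) {x : Fin n} (h : covered a.arcs x) :
    ∃ j : Fin n, ({x, j} : Finset (Fin n)) ∈ a.arcs := by
  obtain ⟨c, hc, hxc⟩ := h
  obtain ⟨u, v, -, rfl⟩ := a.exists_lt_of_mem_arcs hc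
  rcases Finset.mem_insert.mp hxc with rfl | hv
  · exact ⟨v, hc⟩
  · obtain rfl := Finset.mem_singleton.mp hv
    exact ⟨u, by rwa [Finset.pair_comm]⟩

def IsCloser (a : HalfDiag n) (t : Fin n) : Prop :=
  ∃ j < t, ({j, t} : Finset (Fin n)) ∈ a.arcs

theorem not_isCloser_of_lt (a : HalfDiag n) {u v : Fin n}
    (h : ({u, v} : Finset (Fin n)) ∈ a.arcs) (huv : u < v) : ¬ a.IsCloser u := by
  rintro ⟨j, hj, hju⟩
  rw [Finset.pair_comm] at hju
  exact (a.partner_unique h hju ▸ huv).not_gt hj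

theorem eq_pair_of_forall_lt_succ (a : HalfDiag n) {c : Finset (Fin n)} (hc : c ∈ a.arcs)
    {t : Fin n} (hlt : ∀ x ∈ c, (x : ℕ) < t + 1) :
    (∀ x ∈ c, (x : ℕ) < t) ∨ ∃ j < t, c = {j, t} := by
  obtain ⟨u, v, huv, rfl⟩ := a.exists_lt_of_mem_arcs hc
  rcases (Nat.lt_succ_iff.mp (hlt v (by simp))).lt_or_eq with hvt | hvt
  · refine Or.inl fun x hx => ?_
    rcases Finset.mem_insert.mp hx with rfl | hx
    · exact (Fin.lt_def.mp huv).trans hvt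
    · exact Finset.mem_singleton.mp hx ▸ hvt
  · exact Or.inr ⟨u, Fin.ext hvt ▸ huv, by rw [Fin.ext hvt]⟩

theorem ht_succ (a : HalfDiag n) (t : Fin n) :
    ht a (t + 1) = ht a t + if a.IsCloser t then -1 else 1 := by
  set F : ℕ → Finset (Finset (Fin n)) :=
    fun m => a.arcs.filter fun c => ∀ x : Fin n, x ∈ c → (x : ℕ) < m with hF
  have hht : ∀ m, ht a m = m - 2 * ((F m).card : ℤ) := fun _ => rfl
  have hmono : F t ⊆ F (t + 1) := Finset.monotone_filter_right _
    fun c _ h x hx => Nat.lt_succ_of_lt (h x hx)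
  split_ifs with hcl
  · obtain ⟨j, hjt, hjarc⟩ := hcl
    have hjt' : (j : ℕ) < t := hjt
    have hnot : ({j, t} : Finset (Fin n)) ∉ F t := by simp [hF]
    have hins : F (t + 1) = insert {j, t} (F t) := by
      refine le_antisymm (fun c hc => ?_) (Finset.insert_subset ?_ hmono)
      · obtain ⟨hca, hct⟩ := Finset.mem_filter.mp hc
        rcases a.eq_pair_of_forall_lt_succ hca hct with h | ⟨k, -, rfl⟩
        · exact Finset.mem_insert_of_mem (Finset.mem_filter.mpr ⟨hca, h⟩)
        · rw [a.arc_eq_of_mem hca hjarc (x := t) (by simp) (by simp)]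
          exact Finset.mem_insert_self _ _
      · simp [hF, hjarc]
        omega
    rw [hht, hht, hins, Finset.card_insert_of_notMem hnot]
    push_cast
    ring
  · have heq : F (t + 1) = F t := by
      refine le_antisymm (fun c hc => ?_) hmono
      obtain ⟨hca, hct⟩ := Finset.mem_filter.mp hc
      rcases a.eq_pair_of_forall_lt_succ hca hct with h | ⟨k, hk, rfl⟩
      · exact Finset.mem_filter.mpr ⟨hca, h⟩
      · exact absurd ⟨k, hk, hca⟩ hcl
    rw [hht, hht, heq]
    push_cast
    ring

theorem ht_succ_of_isCloser (a : HalfDiag n) {t : Fin n} (h : a.IsCloser t) :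
    ht a (t + 1) = ht a t - 1 := by
  rw [a.ht_succ, if_pos h]; ring

theorem ht_succ_of_not_isCloser (a : HalfDiag n) {t : Fin n} (h : ¬ a.IsCloser t) :
    ht a (t + 1) = ht a t + 1 := by
  rw [a.ht_succ, if_neg h]

theorem ht_self (a : HalfDiag n) : ht a n = n - 2 * (a.arcs.card : ℤ) := by
  rw [ht, Finset.filter_true_of_mem fun c _ x _ => x.isLt]

theorem ht_start_lt_of_nested (a : HalfDiag n) {u v : Fin n}
    (harc : ({u, v} : Finset (Fin n)) ∈ a.arcs) (huv : u < v)
    (inner : ∀ s t : Fin n, ({s, t} : Finset (Fin n)) ∈ a.arcs → s < t → u < s → t < v →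
      IsExcursion (ht a) s t) :
    ∀ m : ℕ, (u : ℕ) < m → m ≤ v → ht a u < ht a m := by
  intro m
  induction m using Nat.strong_induction_on with
  | _ m ihm =>
  intro hum hmv
  obtain ⟨W, rfl⟩ : ∃ W : Fin n, m = W + 1 := ⟨⟨m - 1, by omega⟩, by simp; omega⟩
  have hstep := a.ht_succ W
  rcases (Nat.lt_succ_iff.mp hum).lt_or_eq with huW | huW
  · split_ifs at hstep with hcl
    · -- `W` closes an arc `{s, W}` nested in `{u, v}`, so the path is back at its level at `s`
      obtain ⟨s, hsW, hsarc⟩ := hcl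
      rw [Fin.lt_def] at hsW
      have hus : u < s := by
        rcases lt_trichotomy u s with h | rfl | h
        · exact h
        · exact absurd (a.partner_unique hsarc harc) (Fin.ne_of_lt (Fin.lt_def.mpr (by omega)))
        · exact (a.not_crossing hsarc harc h huW (Fin.lt_def.mpr (by omega))).elim
      have hexc := inner s W hsarc hsW hus (Fin.lt_def.mpr (by omega))
      rw [hexc.1]
      exact ihm s (by omega) hus (by omega)
    · have := ihm W (by omega) huW (by omega)
      omega
  · obtain rfl : u = W := Fin.ext huW
    rw [a.ht_succ_of_not_isCloser (a.not_isCloser_of_lt harc huv)]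
    omega

theorem ht_end_lt_of_nested (a : HalfDiag n) {u v : Fin n}
    (harc : ({u, v} : Finset (Fin n)) ∈ a.arcs) (huv : u < v)
    (inner : ∀ s t : Fin n, ({s, t} : Finset (Fin n)) ∈ a.arcs → s < t → u < s → t < v →
      IsExcursion (ht a) s t) :
    ∀ m : ℕ, (u : ℕ) < m → m ≤ v → ht a (v + 1) < ht a m := by
  intro m hum hmv
  obtain ⟨k, hk⟩ : ∃ k, (v : ℕ) - m = k := ⟨_, rfl⟩
  induction k using Nat.strong_induction_on generalizing m with
  | _ k ihk =>
  rcases hmv.lt_or_eq with hmv | rfl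
  · obtain ⟨M, rfl⟩ : ∃ M : Fin n, m = M := ⟨⟨m, by omega⟩, rfl⟩
    have hstep := a.ht_succ M
    split_ifs at hstep with hcl
    · have := ihk _ (by omega) (M + 1) (by omega) (by omega) rfl
      omega
    · -- `M` opens an arc `{M, t}` nested in `{u, v}`, and at `t + 1` the path is back at its
      -- level at `M`
      obtain ⟨t, hMt⟩ := a.exists_partner
        (a.covered_of_lt_of_lt harc (Fin.lt_def.mpr hum) (Fin.lt_def.mpr hmv))
      have hMt' : M < t := by
        rcases lt_trichotomy M t with h | rfl | h
        · exact h
        · exact absurd rfl (a.ne_of_pair_mem_arcs hMt)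
        · exact absurd ⟨t, h, by rwa [Finset.pair_comm]⟩ hcl
      have htv : t < v := by
        rcases lt_trichotomy t v with h | rfl | h
        · exact h
        · rw [Finset.pair_comm] at hMt harc
          exact absurd (a.partner_unique hMt harc) (Fin.ne_of_gt (Fin.lt_def.mpr hum))
        · exact (a.not_crossing harc hMt (Fin.lt_def.mpr hum) (Fin.lt_def.mpr hmv) h).elim
      rw [← (inner M t hMt hMt' (Fin.lt_def.mpr hum) htv).1]
      rw [Fin.lt_def] at hMt' htv
      exact ihk _ (by omega) (t + 1) (by omega) (by omega) rfl
  · rw [a.ht_succ_of_isCloser ⟨u, huv, harc⟩]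
    omega

theorem isExcursion_ht (a : HalfDiag n) {u v : Fin n}
    (harc : ({u, v} : Finset (Fin n)) ∈ a.arcs) (huv : u < v) :
    IsExcursion (ht a) u v := by
  obtain ⟨L, hL⟩ : ∃ L, (v : ℕ) - u = L := ⟨_, rfl⟩
  induction L using Nat.strong_induction_on generalizing u v with
  | _ L ih =>
  have inner : ∀ s t : Fin n, ({s, t} : Finset (Fin n)) ∈ a.arcs → s < t → u < s →
      t < v → IsExcursion (ht a) s t := fun s t hst hlt hus htv =>
    ih _ (by rw [Fin.lt_def] at hus htv; omega) hst hlt rfl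
  have huv' : (u : ℕ) < v := huv
  refine ⟨?_, a.ht_start_lt_of_nested harc huv inner⟩
  have hstart := a.ht_start_lt_of_nested harc huv inner v huv' le_rfl
  have hend := a.ht_end_lt_of_nested harc huv inner (u + 1) (by omega) (by omega)
  rw [a.ht_succ_of_isCloser ⟨u, huv, harc⟩] at hend ⊢
  rw [a.ht_succ_of_not_isCloser (a.not_isCloser_of_lt harc huv)] at hend
  omega

theorem mem_arcs_of_isExcursion (a : HalfDiag n) {u v : Fin n} (huv : u < v)
    (h : IsExcursion (ht a) u v) : ({u, v} : Finset (Fin n)) ∈ a.arcs := by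
  have hv : a.IsCloser v := by
    by_contra hcl
    have := h.2 v huv le_rfl
    have := a.ht_succ_of_not_isCloser hcl
    have := h.1
    omega
  obtain ⟨u', hu'v, harc⟩ := hv
  have hexc := a.isExcursion_ht harc hu'v
  rcases lt_trichotomy u u' with hlt | rfl | hlt
  · have := h.2 u' hlt (Fin.lt_def.mp hu'v).le
    have := hexc.1
    have := h.1
    omega
  · exact harc
  · have := hexc.2 u hlt (Fin.lt_def.mp huv).le
    have := hexc.1
    have := h.1
    omega

theorem arcs_subset_of_ht_eq {a b : HalfDiag n} (h : ∀ m ≤ n, ht a m = ht b m) :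
    a.arcs ⊆ b.arcs := by
  intro c hc
  obtain ⟨u, v, huv, rfl⟩ := a.exists_lt_of_mem_arcs hc
  have hvn : (v : ℕ) + 1 ≤ n := v.isLt
  refine b.mem_arcs_of_isExcursion huv ((a.isExcursion_ht hc huv).mono ?_ ?_ ?_)
  · exact (h u (by omega)).symm
  · exact (h _ hvn).symm
  · exact fun m _ hmv => (h m (by omega)).le

theorem eq_of_ht_eq {a b : HalfDiag n} (h : ∀ m ≤ n, ht a m = ht b m) : a = b :=
  ext ((arcs_subset_of_ht_eq h).antisymm (arcs_subset_of_ht_eq fun m hm => (h m hm).symm))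

end HalfDiag

def arcsAvoiding {n : ℕ} (A : Finset (Finset (Fin n))) (x y : Fin n) :
    Finset (Finset (Fin n)) :=
  A.filter fun c => x ∉ c ∧ y ∉ c

@[simp]
theorem mem_arcsAvoiding {n : ℕ} {A : Finset (Finset (Fin n))} {x y : Fin n}
    {c : Finset (Fin n)} : c ∈ arcsAvoiding A x y ↔ c ∈ A ∧ x ∉ c ∧ y ∉ c :=
  Finset.mem_filter

theorem newArcs_comm {n : ℕ} (x y : Fin n) (A : Finset (Finset (Fin n))) :
    newArcs x y A = newArcs y x A := by
  simp only [newArcs, Finset.pair_comm x y, or_comm (a := x ∈ _), and_comm (a := x ∉ _)]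

theorem Eact_of_adjacent (q : ℂ) (e : HalfDiag n) {x y : Fin n} (hxy : (y : ℕ) = x + 1) :
    Eact q y e =
      if ({x, y} : Finset (Fin n)) ∈ e.arcs then q • xi e
      else if ¬ covered e.arcs x ∧ ¬ covered e.arcs y then 0
      else if hb : ∃ b : HalfDiag n, b.arcs = newArcs x y e.arcs then xi hb.choose
      else 0 := by
  obtain ⟨x, hx⟩ := x
  obtain ⟨y, hy⟩ := y
  obtain rfl : y = x + 1 := hxy
  rw [Eact, dif_pos ⟨Nat.le_add_left 1 x, hy⟩]
  rfl

theorem Eop_apply_xi (q : ℂ) (i : ℕ) (e : HalfDiag n) : Eop q n i (xi e) = Eact q i e := by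
  rw [Eop, xi, Finsupp.lsum_single, LinearMap.toSpanSingleton_apply, one_smul]

namespace HalfDiag

variable {n : ℕ}

theorem arcs_eq_insert_insert (e : HalfDiag n) {x y j l : Fin n} (hxy : x ≠ y)
    (hno : ({x, y} : Finset (Fin n)) ∉ e.arcs)
    (hj : ({x, j} : Finset (Fin n)) ∈ e.arcs) (hl : ({y, l} : Finset (Fin n)) ∈ e.arcs) :
    e.arcs = insert {x, j} (insert {y, l} (arcsAvoiding e.arcs x y)) ∧
      ({x, j} : Finset (Fin n)) ∉ insert {y, l} (arcsAvoiding e.arcs x y) ∧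
      ({y, l} : Finset (Fin n)) ∉ arcsAvoiding e.arcs x y := by
  have hlx : l ≠ x := by rintro rfl; exact hno (by rwa [Finset.pair_comm])
  refine ⟨?_, ?_, by simp⟩
  · ext c
    simp only [Finset.mem_insert, mem_arcsAvoiding]
    constructor
    · intro hc
      by_cases hx : x ∈ c
      · exact Or.inl (e.arc_eq_of_mem hc hj hx (by simp))
      by_cases hy : y ∈ c
      · exact Or.inr (Or.inl (e.arc_eq_of_mem hc hl hy (by simp)))
      exact Or.inr (Or.inr ⟨hc, hx, hy⟩)
    · rintro (rfl | rfl | ⟨hc, -⟩) <;> assumption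
  · simp only [Finset.mem_insert, mem_arcsAvoiding, not_or]
    exact ⟨ne_of_mem_of_not_mem' (a := x) (by simp) (by simp [hxy, hlx.symm]), by simp⟩

theorem newArcs_eq_insert_insert (e : HalfDiag n) {x y j l : Fin n} (hxy : x ≠ y)
    (hno : ({x, y} : Finset (Fin n)) ∉ e.arcs)
    (hj : ({x, j} : Finset (Fin n)) ∈ e.arcs) (hl : ({y, l} : Finset (Fin n)) ∈ e.arcs) :
    newArcs x y e.arcs = insert {x, y} (insert {j, l} (arcsAvoiding e.arcs x y)) ∧
      ({x, y} : Finset (Fin n)) ∉ insert {j, l} (arcsAvoiding e.arcs x y) ∧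
      ({j, l} : Finset (Fin n)) ∉ arcsAvoiding e.arcs x y := by
  have hjx : x ≠ j := e.ne_of_pair_mem_arcs hj
  have hly : y ≠ l := e.ne_of_pair_mem_arcs hl
  have hjy : j ≠ y := by rintro rfl; exact hno hj
  have hlx : l ≠ x := by rintro rfl; exact hno (by rwa [Finset.pair_comm])
  have hjl : j ≠ l := by
    rintro rfl
    exact ne_of_mem_of_not_mem' (a := x) (by simp) (by simp [hxy, hjx])
      (e.arc_eq_of_mem hj hl (x := j) (by simp) (by simp))
  have htouch : e.arcs.filter (fun c => x ∈ c ∨ y ∈ c) = {{x, j}, {y, l}} := by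
    ext c
    simp only [Finset.mem_filter, Finset.mem_insert, Finset.mem_singleton]
    constructor
    · rintro ⟨hc, hx | hy⟩
      · exact Or.inl (e.arc_eq_of_mem hc hj hx (by simp))
      · exact Or.inr (e.arc_eq_of_mem hc hl hy (by simp))
    · rintro (rfl | rfl)
      · exact ⟨hj, by simp⟩
      · exact ⟨hl, by simp⟩
  have hP : ((e.arcs.filter fun c => x ∈ c ∨ y ∈ c).biUnion id) \ {x, y} = {j, l} := by
    rw [htouch]
    ext z
    simp only [Finset.biUnion_insert, Finset.singleton_biUnion, id, Finset.mem_sdiff,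
      Finset.mem_union, Finset.mem_insert, Finset.mem_singleton]
    constructor
    · rintro ⟨(rfl | rfl) | (rfl | rfl), hz⟩ <;> simp_all
    · rintro (rfl | rfl) <;> simp_all [eq_comm]
  refine ⟨?_, ?_, fun h => ?_⟩
  · simp only [newArcs, arcsAvoiding] at hP ⊢
    rw [hP, if_pos (Finset.card_pair hjl), Finset.union_comm, ← Finset.insert_eq]
  · simp only [Finset.mem_insert, mem_arcsAvoiding, not_or]
    exact ⟨ne_of_mem_of_not_mem' (a := x) (by simp) (by simp [hjx, hlx.symm]), by simp⟩
  · exact ne_of_mem_of_not_mem' (a := x) (by simp) (by simp [hjx, hlx.symm])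
      (e.arc_eq_of_mem hj (mem_arcsAvoiding.mp h).1 (x := j) (by simp) (by simp))

theorem arcs_eq_insert_of_not_covered (e : HalfDiag n) {x y j : Fin n}
    (hj : ({x, j} : Finset (Fin n)) ∈ e.arcs) (hy : ¬ covered e.arcs y) :
    e.arcs = insert {x, j} (arcsAvoiding e.arcs x y) ∧
      ({x, j} : Finset (Fin n)) ∉ arcsAvoiding e.arcs x y := by
  refine ⟨?_, by simp⟩
  ext c
  simp only [Finset.mem_insert, mem_arcsAvoiding]
  constructor
  · intro hc
    by_cases hx : x ∈ c
    · exact Or.inl (e.arc_eq_of_mem hc hj hx (by simp))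
    · exact Or.inr ⟨hc, hx, fun hyc => hy ⟨c, hc, hyc⟩⟩
  · rintro (rfl | ⟨hc, -⟩) <;> assumption

theorem newArcs_eq_insert_of_not_covered (e : HalfDiag n) {x y j : Fin n}
    (hno : ({x, y} : Finset (Fin n)) ∉ e.arcs) (hj : ({x, j} : Finset (Fin n)) ∈ e.arcs)
    (hy : ¬ covered e.arcs y) :
    newArcs x y e.arcs = insert {x, y} (arcsAvoiding e.arcs x y) ∧
      ({x, y} : Finset (Fin n)) ∉ arcsAvoiding e.arcs x y := by
  have hjy : j ≠ y := by rintro rfl; exact hno hj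
  have htouch : e.arcs.filter (fun c => x ∈ c ∨ y ∈ c) = {{x, j}} := by
    ext c
    simp only [Finset.mem_filter, Finset.mem_singleton]
    constructor
    · rintro ⟨hc, hx | hyc⟩
      · exact e.arc_eq_of_mem hc hj hx (by simp)
      · exact absurd ⟨c, hc, hyc⟩ hy
    · rintro rfl
      exact ⟨hj, by simp⟩
  have hP : ((e.arcs.filter fun c => x ∈ c ∨ y ∈ c).biUnion id) \ {x, y} = {j} := by
    rw [htouch]
    ext z
    simp only [Finset.singleton_biUnion, id, Finset.mem_sdiff, Finset.mem_insert,
      Finset.mem_singleton]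
    constructor
    · rintro ⟨rfl | rfl, hz⟩ <;> simp_all
    · rintro rfl
      exact ⟨Or.inr rfl, by simp [hjy, (e.ne_of_pair_mem_arcs hj).symm]⟩
  refine ⟨?_, by simp⟩
  simp only [newArcs, arcsAvoiding] at hP ⊢
  rw [hP, if_neg (by simp), Finset.union_empty]

theorem ht_add_of_arcs_eq_insert {a b : HalfDiag n} {R : Finset (Finset (Fin n))}
    {s t : Finset (Fin n)} (ha : a.arcs = insert s R) (hb : b.arcs = insert t R)
    (hs : s ∉ R) (htR : t ∉ R) (m : ℕ) :
    ht a m + 2 * (if ∀ z ∈ s, (z : ℕ) < m then 1 else 0) =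
      ht b m + 2 * (if ∀ z ∈ t, (z : ℕ) < m then 1 else 0) := by
  simp only [ht, Finset.natCast_card_filter]
  rw [ha, hb, Finset.sum_insert hs, Finset.sum_insert htR]
  ring

theorem card_arcs_eq_and_ht_le_of_arcs_eq_newArcs (e c : HalfDiag n) {x y : Fin n}
    (hxy : (y : ℕ) = x + 1) (hno : ({x, y} : Finset (Fin n)) ∉ e.arcs)
    (hcov : covered e.arcs x ∨ covered e.arcs y) (hc : c.arcs = newArcs x y e.arcs) :
    c.arcs.card = e.arcs.card ∧ ∀ m, ht c m ≤ ht e m + if m = y then 2 else 0 := by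
  have hne : x ≠ y := fun h => by rw [h] at hxy; omega
  by_cases hx : covered e.arcs x <;> by_cases hy : covered e.arcs y
  · obtain ⟨j, hj⟩ := e.exists_partner hx
    obtain ⟨l, hl⟩ := e.exists_partner hy
    obtain ⟨hA, hsx, hsy⟩ := e.arcs_eq_insert_insert hne hno hj hl
    obtain ⟨hN, hsxy, hsjl⟩ := e.newArcs_eq_insert_insert hne hno hj hl
    set R := arcsAvoiding e.arcs x y
    rw [hN] at hc
    refine ⟨?_, fun m => ?_⟩
    · rw [hc, hA, Finset.card_insert_of_notMem hsxy, Finset.card_insert_of_notMem hsjl,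
        Finset.card_insert_of_notMem hsx, Finset.card_insert_of_notMem hsy]
    · simp only [ht, Finset.natCast_card_filter]
      rw [hc, hA, Finset.sum_insert hsxy, Finset.sum_insert hsjl, Finset.sum_insert hsx,
        Finset.sum_insert hsy]
      simp only [Finset.mem_insert, Finset.mem_singleton, forall_eq_or_imp, forall_eq]
      split_ifs <;> omega
  · obtain ⟨j, hj⟩ := e.exists_partner hx
    obtain ⟨hA, hsx⟩ := e.arcs_eq_insert_of_not_covered hj hy
    obtain ⟨hN, hsxy⟩ := e.newArcs_eq_insert_of_not_covered hno hj hy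
    set R := arcsAvoiding e.arcs x y
    rw [hN] at hc
    refine ⟨by rw [hc, hA, Finset.card_insert_of_notMem hsxy,
      Finset.card_insert_of_notMem hsx], fun m => ?_⟩
    have := ht_add_of_arcs_eq_insert hc hA hsxy hsx m
    simp only [Finset.mem_insert, Finset.mem_singleton, forall_eq_or_imp, forall_eq] at this
    split_ifs at this ⊢ <;> omega
  · obtain ⟨l, hl⟩ := e.exists_partner hy
    rw [Finset.pair_comm] at hno
    obtain ⟨hA, hsy⟩ := e.arcs_eq_insert_of_not_covered hl hx
    obtain ⟨hN, hsyx⟩ := e.newArcs_eq_insert_of_not_covered hno hl hx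
    set R := arcsAvoiding e.arcs y x
    rw [newArcs_comm, hN] at hc
    refine ⟨by rw [hc, hA, Finset.card_insert_of_notMem hsyx,
      Finset.card_insert_of_notMem hsy], fun m => ?_⟩
    have := ht_add_of_arcs_eq_insert hc hA hsyx hsy m
    simp only [Finset.mem_insert, Finset.mem_singleton, forall_eq_or_imp, forall_eq] at this
    split_ifs at this ⊢ <;> omega
  · exact (hcov.elim hx hy).elim

end HalfDiag

def strictLowerBasis {n : ℕ} (p : ℕ) (a : HalfDiag n) : Set (V n) :=
  {v : V n | ∃ b : HalfDiag n, b.arcs.card = p ∧ b ≠ a ∧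
    (∀ i ≤ n, ht b i ≤ ht a i) ∧ v = xi b}

namespace IsBoxAdd

variable {n : ℕ} {a a' : HalfDiag n} {i : ℕ}

theorem ht_eq_of_ne (h : IsBoxAdd a a' i) {m : ℕ} (hm : m ≤ n) (hmi : m ≠ i) :
    ht a' m = ht a m :=
  h.2.2.2.2.2 m hm hmi

theorem card_arcs_eq (h : IsBoxAdd a a' i) : a'.arcs.card = a.arcs.card := by
  have := h.ht_eq_of_ne le_rfl (by have := h.2.1; omega)
  rw [a.ht_self, a'.ht_self] at this
  omega

theorem ht_le (h : IsBoxAdd a a' i) (m : ℕ) (hm : m ≤ n) : ht a m ≤ ht a' m := by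
  obtain ⟨-, -, -, -, hup, hsame⟩ := h
  rcases eq_or_ne m i with rfl | hmi
  · omega
  · exact (hsame m hm hmi).ge

theorem exists_adjacent (h : IsBoxAdd a a' i) :
    ∃ x y : Fin n, (y : ℕ) = x + 1 ∧ (y : ℕ) = i :=
  have ⟨h₁, hn, _⟩ := h
  ⟨⟨i - 1, by omega⟩, ⟨i, by omega⟩, by simp only; omega, rfl⟩

theorem ht_le_of_ht_le_add (h : IsBoxAdd a a' i) {e c : HalfDiag n}
    (he : ∀ m ≤ n, ht e m ≤ ht a m) (hc : ∀ m, ht c m ≤ ht e m + if m = i then 2 else 0)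
    (m : ℕ) (hm : m ≤ n) : ht c m ≤ ht a' m := by
  obtain ⟨-, -, -, -, hup, hsame⟩ := h
  have := hc m
  have := he m hm
  split_ifs at * with hmi
  · subst hmi; omega
  · have := hsame m hm hmi; omega

theorem ne_of_ht_le_add (h : IsBoxAdd a a' i) {e c : HalfDiag n}
    (he : ∀ m ≤ n, ht e m ≤ ht a m) (hea : e ≠ a)
    (hc : ∀ m, ht c m ≤ ht e m + if m = i then 2 else 0) : c ≠ a' := by
  rintro rfl
  obtain ⟨-, -, -, -, hup, hsame⟩ := h
  refine hea (HalfDiag.eq_of_ht_eq fun m hm => le_antisymm (he m hm) ?_)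
  have := hc m
  split_ifs at this with hmi
  · subst hmi; omega
  · have := hsame m hm hmi; omega

theorem strictLowerBasis_subset (h : IsBoxAdd a a' i) (p : ℕ) :
    strictLowerBasis p a ⊆ strictLowerBasis p a' := by
  rintro _ ⟨e, hcard, hea, he, rfl⟩
  have hc : ∀ m, ht e m ≤ ht e m + if m = i then 2 else 0 := fun m => by split_ifs <;> omega
  exact ⟨e, hcard, h.ne_of_ht_le_add he hea hc, h.ht_le_of_ht_le_add he hc, rfl⟩

theorem xi_mem_strictLowerBasis (h : IsBoxAdd a a' i) {p : ℕ} (ha : a.arcs.card = p) :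
    xi a ∈ strictLowerBasis p a' := by
  refine ⟨a, ha, fun hab => ?_, fun m hm => h.ht_le m hm, rfl⟩
  have hup := h.2.2.2.2.1
  rw [hab] at hup
  omega

variable {x y : Fin n}

theorem isCloser_and_not_isCloser (h : IsBoxAdd a a' y) (hxy : (y : ℕ) = x + 1) :
    a.IsCloser x ∧ ¬ a.IsCloser y := by
  obtain ⟨-, -, hx, hy, -⟩ := h
  have hx' := a.ht_succ x
  have hy' := a.ht_succ y
  rw [← hxy] at hx'
  rw [hxy, Nat.add_sub_cancel] at hx
  rw [← hxy] at hx
  constructor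
  · by_contra hcl
    rw [if_neg hcl] at hx'
    omega
  · intro hcl
    rw [if_pos hcl] at hy'
    omega

theorem mem_arcs (h : IsBoxAdd a a' y) (hxy : (y : ℕ) = x + 1) {u v : Fin n} (huv : u < v)
    (harc : ({u, v} : Finset (Fin n)) ∈ a.arcs) (hu : u ≠ y) (hv : v ≠ x) :
    ({u, v} : Finset (Fin n)) ∈ a'.arcs := by
  have hvn : (v : ℕ) + 1 ≤ n := v.isLt
  have hu' : (u : ℕ) ≠ y := fun e => hu (Fin.ext e)
  have hv' : (v : ℕ) + 1 ≠ y := fun e => hv (Fin.ext (by omega))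
  refine a'.mem_arcs_of_isExcursion huv ((a.isExcursion_ht harc huv).mono ?_ ?_ ?_)
  · exact h.ht_eq_of_ne (by omega) hu'
  · exact h.ht_eq_of_ne hvn hv'
  · exact fun m _ hmv => h.ht_le m (by omega)

theorem arcsAvoiding_subset (h : IsBoxAdd a a' y) (hxy : (y : ℕ) = x + 1) :
    arcsAvoiding a.arcs x y ⊆ a'.arcs := by
  intro c hc
  obtain ⟨hca, hx, hy⟩ := mem_arcsAvoiding.mp hc
  obtain ⟨u, v, huv, rfl⟩ := a.exists_lt_of_mem_arcs hca
  exact h.mem_arcs hxy huv hca (by rintro rfl; simp at hy) (by rintro rfl; simp at hx)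

theorem pair_mem_arcs (h : IsBoxAdd a a' y) (hxy : (y : ℕ) = x + 1) :
    ({x, y} : Finset (Fin n)) ∈ a'.arcs := by
  obtain ⟨hx, hy⟩ := h.isCloser_and_not_isCloser hxy
  have hx' := a.ht_succ_of_isCloser hx
  have hy' := a.ht_succ_of_not_isCloser hy
  obtain ⟨-, -, -, -, hup, hsame⟩ := h
  refine a'.mem_arcs_of_isExcursion (Fin.lt_def.mpr (by omega)) ⟨?_, fun m hxm hmy => ?_⟩
  · rw [hsame ((y : ℕ) + 1) y.isLt (by omega), hsame x (by omega) (by omega)]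
    rw [← hxy] at hx'
    omega
  · obtain rfl : m = y := by omega
    rw [hsame x (by omega) (by omega), hup]
    rw [← hxy] at hx'
    omega

theorem pair_mem_arcs_of_nested (h : IsBoxAdd a a' y) (hxy : (y : ℕ) = x + 1) {j l : Fin n}
    (hj : ({j, x} : Finset (Fin n)) ∈ a.arcs) (hjx : j < x)
    (hl : ({y, l} : Finset (Fin n)) ∈ a.arcs) (hyl : y < l) :
    ({j, l} : Finset (Fin n)) ∈ a'.arcs := by
  obtain ⟨hj_ret, hj_above⟩ := a.isExcursion_ht hj hjx
  obtain ⟨hl_ret, hl_above⟩ := a.isExcursion_ht hl hyl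
  rw [Fin.lt_def] at hjx hyl
  have hln : (l : ℕ) + 1 ≤ n := l.isLt
  rw [← hxy] at hj_ret
  obtain ⟨-, -, -, -, hup, hsame⟩ := h
  refine a'.mem_arcs_of_isExcursion (Fin.lt_def.mpr (by omega)) ⟨?_, fun m hjm hml => ?_⟩
  · rw [hsame _ hln (by omega), hsame j (by omega) (by omega), hl_ret, hj_ret]
  · rw [hsame j (by omega) (by omega)]
    rcases lt_trichotomy m y with hmy | rfl | hmy
    · have := hj_above m hjm (by omega)
      have := hsame m (by omega) (by omega)
      omega
    · omega
    · have := hl_above m hmy hml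
      have := hsame m (by omega) (by omega)
      omega

theorem newArcs_eq (h : IsBoxAdd a a' y) (hxy : (y : ℕ) = x + 1) :
    newArcs x y a.arcs = a'.arcs := by
  obtain ⟨⟨j, hjx, hj⟩, hy⟩ := h.isCloser_and_not_isCloser hxy
  have hxy' : x < y := Fin.lt_def.mpr (by omega)
  have hno : ({x, y} : Finset (Fin n)) ∉ a.arcs := fun hmem => hy ⟨x, hxy', hmem⟩
  have hxj : ({x, j} : Finset (Fin n)) ∈ a.arcs := by rwa [Finset.pair_comm]
  by_cases hcov : covered a.arcs y
  · obtain ⟨l, hl⟩ := a.exists_partner hcov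
    have hyl : y < l := by
      rcases lt_trichotomy y l with hlt | rfl | hlt
      · exact hlt
      · exact absurd rfl (a.ne_of_pair_mem_arcs hl)
      · exact absurd ⟨l, hlt, by rwa [Finset.pair_comm]⟩ hy
    obtain ⟨hA, hsx, hsy⟩ := a.arcs_eq_insert_insert hxy'.ne hno hxj hl
    obtain ⟨hN, hsxy, hsjl⟩ := a.newArcs_eq_insert_insert hxy'.ne hno hxj hl
    set R := arcsAvoiding a.arcs x y
    rw [hN]
    refine Finset.eq_of_subset_of_card_le ?_ ?_
    · refine Finset.insert_subset (h.pair_mem_arcs hxy) (Finset.insert_subset ?_ ?_)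
      · exact h.pair_mem_arcs_of_nested hxy hj hjx hl hyl
      · exact h.arcsAvoiding_subset hxy
    · rw [h.card_arcs_eq, hA, Finset.card_insert_of_notMem hsxy, Finset.card_insert_of_notMem hsjl,
        Finset.card_insert_of_notMem hsx, Finset.card_insert_of_notMem hsy]
  · obtain ⟨hA, hsx⟩ := a.arcs_eq_insert_of_not_covered hxj hcov
    obtain ⟨hN, hsxy⟩ := a.newArcs_eq_insert_of_not_covered hno hxj hcov
    set R := arcsAvoiding a.arcs x y
    rw [hN]
    refine Finset.eq_of_subset_of_card_le
      (Finset.insert_subset (h.pair_mem_arcs hxy) (h.arcsAvoiding_subset hxy)) ?_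
    rw [h.card_arcs_eq, hA, Finset.card_insert_of_notMem hsxy, Finset.card_insert_of_notMem hsx]

theorem Eop_xi (q : ℂ) (h : IsBoxAdd a a' i) : Eop q n i (xi a) = xi a' := by
  obtain ⟨x, y, hxy, rfl⟩ := h.exists_adjacent
  obtain ⟨hx, hy⟩ := h.isCloser_and_not_isCloser hxy
  have hno : ({x, y} : Finset (Fin n)) ∉ a.arcs :=
    fun hmem => hy ⟨x, Fin.lt_def.mpr (by omega), hmem⟩
  have hcov : covered a.arcs x := by
    obtain ⟨j, -, hj⟩ := hx
    exact ⟨_, hj, by simp⟩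
  have hb : ∃ b : HalfDiag n, b.arcs = newArcs x y a.arcs := ⟨a', (h.newArcs_eq hxy).symm⟩
  rw [Eop_apply_xi, Eact_of_adjacent q a hxy, if_neg hno, if_neg (fun h => h.1 hcov),
    dif_pos hb]
  exact congrArg xi (HalfDiag.ext (hb.choose_spec.trans (h.newArcs_eq hxy)))

theorem Eop_mem_span (q : ℂ) (h : IsBoxAdd a a' i) {p : ℕ} {v : V n}
    (hv : v ∈ strictLowerBasis p a) :
    Eop q n i v ∈ Submodule.span ℂ (strictLowerBasis p a') := by
  obtain ⟨e, hcard, hea, he, rfl⟩ := hv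
  obtain ⟨x, y, hxy, rfl⟩ := h.exists_adjacent
  rw [Eop_apply_xi, Eact_of_adjacent q e hxy]
  split_ifs with hno hcov hb
  · exact Submodule.smul_mem _ _
      (Submodule.subset_span (h.strictLowerBasis_subset p ⟨e, hcard, hea, he, rfl⟩))
  · exact Submodule.zero_mem _
  · obtain ⟨hcard', hc⟩ := HalfDiag.card_arcs_eq_and_ht_le_of_arcs_eq_newArcs e _ hxy hno
      (by tauto) hb.choose_spec
    exact Submodule.subset_span ⟨_, hcard'.trans hcard, h.ne_of_ht_le_add he hea hc,
      h.ht_le_of_ht_le_add he hc, rfl⟩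
  · exact Submodule.zero_mem _

theorem sub_mem_span (q : ℂ) (μ : ℂ) (h : IsBoxAdd a a' i) {p : ℕ} (ha : a.arcs.card = p)
    {w : V n} (hw : w - xi a ∈ Submodule.span ℂ (strictLowerBasis p a)) :
    (Eop q n i w - μ • w) - xi a' ∈ Submodule.span ℂ (strictLowerBasis p a') := by
  have hEop : Submodule.span ℂ (strictLowerBasis p a) ≤
      (Submodule.span ℂ (strictLowerBasis p a')).comap (Eop q n i) :=
    Submodule.span_le.mpr fun v hv => h.Eop_mem_span q hv
  have hmono := Submodule.span_mono (R := ℂ) (h.strictLowerBasis_subset p)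
  have hsplit : (Eop q n i w - μ • w) - xi a' =
      Eop q n i (w - xi a) - μ • (w - xi a) - μ • xi a := by
    rw [map_sub, h.Eop_xi, smul_sub]
    abel
  rw [hsplit]
  exact Submodule.sub_mem _ (Submodule.sub_mem _ (hEop hw) (Submodule.smul_mem _ _ (hmono hw)))
    (Submodule.smul_mem _ _ (Submodule.subset_span (h.xi_mem_strictLowerBasis ha)))

end IsBoxAdd

theorem chainVec_sub_xi_mem_span {n p r : ℕ} (q : ℝ) {d : ℕ → HalfDiag n}
    {idx : ℕ → ℕ} (h₀ : (d 0).arcs.card = p)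
    (hstep : ∀ k < r, IsBoxAdd (d k) (d (k + 1)) (idx (k + 1))) :
    ∀ k ≤ r, (d k).arcs.card = p ∧
      chainVec q d idx k - xi (d k) ∈ Submodule.span ℂ (strictLowerBasis p (d k)) := by
  intro k
  induction k with
  | zero => exact fun _ => ⟨h₀, by simp [chainVec]⟩
  | succ k ih =>
    intro hk
    obtain ⟨hcard, hmem⟩ := ih (by omega)
    have hbox := hstep k (by omega)
    exact ⟨hbox.card_arcs_eq.trans hcard, hbox.sub_mem_span _ _ hcard hmem⟩

end

theorem chainVec_triangular_general (n p : ℕ) (q : ℝ) (a : HalfDiag n)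
    (r : ℕ) (d : ℕ → HalfDiag n) (idx : ℕ → ℕ) (hd : IsChainTo p r d idx a) :
    chainVec q d idx r - xi a ∈ Submodule.span ℂ
      {v : V n | ∃ b : HalfDiag n, b.arcs.card = p ∧ b ≠ a ∧
        (∀ i ≤ n, ht b i ≤ ht a i) ∧ v = xi b} := by
  obtain ⟨hmin, rfl, hstep⟩ := hd
  exact (chainVec_sub_xi_mem_span q hmin.1 hstep r le_rfl).2

/-- Triangularity of the orthogonal basis: `ξ′_a − ξ_a` lies in the span of the basis
vectors indexed by half-diagrams with `p` arcs strictly below `a` in the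
height-domination order. Here `ξ′_a` is realized as the vector obtained from any
chain of box additions from the minimal half-diagram with `p` arcs to `a`. -/
theorem chainVec_triangular (n p : ℕ) (hp : 2 * p ≤ n) (q : ℝ)
    (hΔ : ∀ k : ℕ, 1 ≤ k → k ≤ n → Delta (k : ℤ) q ≠ 0)
    (a : HalfDiag n) (ha : a.arcs.card = p)
    (r : ℕ) (d : ℕ → HalfDiag n) (idx : ℕ → ℕ) (hd : IsChainTo p r d idx a) :
    chainVec q d idx r - xi a ∈ Submodule.span ℂ
      {v : V n | ∃ b : HalfDiag n, b.arcs.card = p ∧ b ≠ a ∧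
        (∀ i ≤ n, ht b i ≤ ht a i) ∧ v = xi b} :=
  chainVec_triangular_general n p q a r d idx hd
end
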